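/- arXiv:2601.06538 — 7 statements merged into one kernel-verified Lean document; each statement's English description precedes it below -/
import Mathlib

section
/- Let (Z, 𝔷, T) be a probability space and δ a lower density on the completion of T (i.e., δ maps measurable sets to measurable sets with δ(∅)=∅, δ(Z)=Z, δ(A∩B)=δ(A)∩δ(B), T(δ(A)△A)=0, and δ(A)=δ(B) whenever A and B differ by a null set). If {C_i : i ∈ I} is an arbitrary (possibly uncountable) family of measurable sets such that C_i ⊆ δ(C_i) for every i ∈ I, then the union ⋃_{i∈I} C_i is measurable with respect to the completion of T, and ⋃_{i∈I} C_i ⊆ δ(⋃_{i∈I} C_i). -/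
/-!
Since `T` is finite, some countable subfamily `C j, j ∈ S`, has a union `E` that almost contains
every `C i` (an essential union of the family). Monotonicity of `δ` and its invariance under null modifications
give `C i ⊆ δ (C i) ⊆ δ (C i ∪ E) = δ E`, so `E ⊆ ⋃ i, C i ⊆ δ E`. As `δ E` differs from `E`
by a null set, the whole union differs from `E` by a null set: it is null measurable and has the
same image `δ E` under `δ`.
-/

open MeasureTheory Set

namespace MeasureTheory

lemma exists_countable_ae_subset_biUnion {α ι : Type*} [MeasurableSpace α] (μ : Measure α)
    [SFinite μ] {C : ι → Set α} (hC : ∀ i, NullMeasurableSet (C i) μ) :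
    ∃ S : Set ι, S.Countable ∧ ∀ i, C i ≤ᵐ[μ] ⋃ j ∈ S, C j := by
  set M : ι → Set α := fun i ↦ toMeasurable μ (C i)
  obtain ⟨D, hDM, hD, hCD⟩ :=
    Measure.exists_ae_subset_biUnion_countable μ (C := range M) (forall_mem_range.2 fun i ↦
      measurableSet_toMeasurable μ (C i))
  obtain ⟨S, rfl, hinj⟩ := exists_image_eq_injOn_of_subset_range hDM
  have hS : S.Countable := countable_of_injective_of_countable_image hinj hD
  have hMC : ⋃ j ∈ S, M j =ᵐ[μ] ⋃ j ∈ S, C j :=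
    ae_eq_set_biUnion hS fun j _ ↦ (hC j).toMeasurable_ae_eq
  refine ⟨S, hS, fun i ↦ ?_⟩
  have hCM : C i ≤ᵐ[μ] ⋃₀ (M '' S) := (hC i).toMeasurable_ae_eq.symm.le.trans (hCD _ ⟨i, rfl⟩)
  rw [sUnion_image] at hCM
  exact hCM.trans hMC.le

section LowerDensity

variable {α : Type*} [MeasurableSpace α] {μ : Measure α} {δ : Set α → Set α}

lemma map_subset_map_of_ae_le
    (hinter : ∀ A B, NullMeasurableSet A μ → NullMeasurableSet B μ → δ (A ∩ B) = δ A ∩ δ B)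
    (hcong : ∀ A B, NullMeasurableSet A μ → NullMeasurableSet B μ →
      μ (symmDiff A B) = 0 → δ A = δ B)
    {A B : Set α} (hA : NullMeasurableSet A μ) (hB : NullMeasurableSet B μ) (hAB : A ≤ᵐ[μ] B) :
    δ A ⊆ δ B := by
  have hAB' : NullMeasurableSet (A ∪ B) μ := hA.union hB
  have hmono : δ A ⊆ δ (A ∪ B) := by
    have h := hinter A _ hA hAB'
    rw [inter_eq_self_of_subset_left subset_union_left] at h
    exact h ▸ inter_subset_right
  rwa [hcong _ _ hAB' hB (measure_symmDiff_eq_zero_iff.2 (union_ae_eq_right_iff_ae_subset.2 hAB))]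
    at hmono

end LowerDensity

end MeasureTheory

theorem stmt0_general {Z : Type*} [MeasurableSpace Z] (T : Measure Z) [IsProbabilityMeasure T]
    (δ : Set Z → Set Z)
    (hinter : ∀ A B, NullMeasurableSet A T → NullMeasurableSet B T →
      δ (A ∩ B) = δ A ∩ δ B)
    (hae : ∀ A, NullMeasurableSet A T → T (symmDiff (δ A) A) = 0)
    (hcong : ∀ A B, NullMeasurableSet A T → NullMeasurableSet B T →
      T (symmDiff A B) = 0 → δ A = δ B)
    {ι : Type*} (C : ι → Set Z)
    (hC : ∀ i, NullMeasurableSet (C i) T)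
    (hCsub : ∀ i, C i ⊆ δ (C i)) :
    NullMeasurableSet (⋃ i, C i) T ∧ (⋃ i, C i) ⊆ δ (⋃ i, C i) := by
  obtain ⟨S, hS, hCE⟩ := exists_countable_ae_subset_biUnion T hC
  set E := ⋃ j ∈ S, C j
  have hE : NullMeasurableSet E T := .biUnion hS fun j _ ↦ hC j
  have hUδE : (⋃ i, C i) ⊆ δ E :=
    iUnion_subset fun i ↦ (hCsub i).trans (map_subset_map_of_ae_le hinter hcong (hC i) hE (hCE i))
  have hUE : (⋃ i, C i) =ᵐ[T] E :=
    (hUδE.eventuallyLE.trans (measure_symmDiff_eq_zero_iff.1 (hae E hE)).le).antisymm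
      (iUnion₂_subset fun j _ ↦ subset_iUnion C j).eventuallyLE
  have hU : NullMeasurableSet (⋃ i, C i) T := hE.congr hUE.symm
  exact ⟨hU, hcong _ _ hU hE (measure_symmDiff_eq_zero_iff.2 hUE) ▸ hUδE⟩

theorem stmt0 {Z : Type*} [MeasurableSpace Z] (T : Measure Z) [IsProbabilityMeasure T]
    (δ : Set Z → Set Z)
    (hmeas : ∀ A, NullMeasurableSet A T → NullMeasurableSet (δ A) T)
    (hempty : δ ∅ = ∅) (huniv : δ univ = univ)
    (hinter : ∀ A B, NullMeasurableSet A T → NullMeasurableSet B T →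
      δ (A ∩ B) = δ A ∩ δ B)
    (hae : ∀ A, NullMeasurableSet A T → T (symmDiff (δ A) A) = 0)
    (hcong : ∀ A B, NullMeasurableSet A T → NullMeasurableSet B T →
      T (symmDiff A B) = 0 → δ A = δ B)
    {ι : Type*} (C : ι → Set Z)
    (hC : ∀ i, NullMeasurableSet (C i) T)
    (hCsub : ∀ i, C i ⊆ δ (C i)) :
    NullMeasurableSet (⋃ i, C i) T ∧ (⋃ i, C i) ⊆ δ (⋃ i, C i) :=
  stmt0_general T δ hinter hae hcong C hC hCsub
end

section
/- Let (X, 𝔄, P) and (Y, 𝔅, Q) be probability spaces, R a probability measure on 𝔄 ⊗ 𝔅 with marginals P and Q, and {(𝔄_y, S_y) : y ∈ Y} a Q-disintegration of R. Let ℳ := {E ⊆ X × Y : ∃ N ∈ 𝔅₀ ∀ y ∉ N, Ŝ_y(E^y) = 0} and let 𝔄⊙𝔅 := {W △ N : W ∈ 𝔄 ⊗ 𝔅, N ∈ ℳ}. Then 𝔄⊙𝔅 is a σ-algebra containing 𝔄 ⊗ 𝔅, and the formula R̂_⊙(W △ N) := R(W) is a well-defined countably additive probability measure on 𝔄⊙𝔅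 extending R. -/
/-!
Let `ℓ` be the σ-filter on `X × Y` of sets `s` with `∀ᵐ y ∂Q, ∀ᵐ x ∂S_y, (x, y) ∈ s`, so that
`ℳ` consists of the `ℓ`-negligible sets and `𝔄⊙𝔅` of the sets `ℓ`-a.e. equal to a set of
`𝔄 ⊗ 𝔅`. A π-λ argument over rectangles gives `R E = ∫ S_y(E^y) dQ` for every `E ∈ 𝔄 ⊗ 𝔅`, so
measurable sets in `ℳ` are `R`-null. Hence `R W` depends only on the `ℓ`-class of `W`, and
measurable sets that are `ℓ`-a.e. disjoint are `R`-a.e. disjoint, which gives countable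
additivity of `R̂_⊙`.
-/

open MeasureTheory Set Filter Function

instance Filter.countableInterFilter_bind {α β : Type*} {l : Filter β} {m : β → Filter α}
    [CountableInterFilter l] [∀ b, CountableInterFilter (m b)] :
    CountableInterFilter (l.bind m) :=
  ⟨fun S hSc hS => by
    simp_rw [mem_bind', countable_sInter_mem hSc]
    exact (eventually_countable_ball hSc).2 hS⟩

namespace MeasureTheory

theorem ae_iff_exists_null {α : Type*} [MeasurableSpace α] {μ : Measure α} {p : α → Prop} :
    (∀ᵐ a ∂μ, p a) ↔ ∃ N, MeasurableSet N ∧ μ N = 0 ∧ ∀ a ∉ N, p a := by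
  refine ⟨fun h => ?_, fun ⟨N, _, hN, hp⟩ => (measure_eq_zero_iff_ae_notMem.1 hN).mono hp⟩
  obtain ⟨N, hsub, hN, hN0⟩ := exists_measurable_superset_of_null (ae_iff.1 h)
  exact ⟨N, hN, hN0, fun a ha => not_not.1 fun hpa => ha (hsub hpa)⟩

section EventuallyMeasurable

variable {α : Type*} {l : Filter α}

theorem exists_eq_symmDiff_iff_eventuallyEq {V W : Set α} :
    (∃ N, (∀ᶠ x in l, x ∉ N) ∧ V = symmDiff W N) ↔ V =ᶠ[l] W := by
  rw [eventuallyEq_set]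
  constructor
  · rintro ⟨N, hN, rfl⟩
    filter_upwards [hN] with x hx
    simp [mem_symmDiff, hx]
  · intro h
    refine ⟨symmDiff W V, ?_, (symmDiff_symmDiff_cancel_left W V).symm⟩
    filter_upwards [h] with x hx
    simp [mem_symmDiff, hx]

variable [m : MeasurableSpace α] {R : Measure α}

def Measure.AbsolutelyContinuousFilter (R : Measure α) (l : Filter α) : Prop :=
  ∀ s, MeasurableSet s → (∀ᶠ x in l, x ∉ s) → R s = 0

theorem Measure.AbsolutelyContinuousFilter.measure_eq (hl : R.AbsolutelyContinuousFilter l)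
    {s t : Set α} (hs : MeasurableSet s) (ht : MeasurableSet t) (hst : s =ᶠ[l] t) :
    R s = R t := by
  refine measure_congr <| measure_symmDiff_eq_zero_iff.1 <| hl _ (hs.symmDiff ht) ?_
  filter_upwards [eventuallyEq_set.1 hst] with x hx
  simp [mem_symmDiff, hx]

theorem Measure.AbsolutelyContinuousFilter.aedisjoint (hl : R.AbsolutelyContinuousFilter l)
    {s t s' t' : Set α} (hs : MeasurableSet s) (ht : MeasurableSet t) (hst : Disjoint s' t')
    (hss' : s =ᶠ[l] s') (htt' : t =ᶠ[l] t') : AEDisjoint R s t := by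
  refine hl _ (hs.inter ht) ?_
  filter_upwards [eventuallyEq_set.1 hss', eventuallyEq_set.1 htt'] with x hs' ht' hx
  exact hst.notMem_of_mem_left (hs'.1 hx.1) (ht'.1 hx.2)

variable [CountableInterFilter l]

theorem EventuallyMeasurableSet.measure_choose_eq (hl : R.AbsolutelyContinuousFilter l)
    {V W : Set α} (hV : EventuallyMeasurableSet m l V) (hW : MeasurableSet W) (hVW : V =ᶠ[l] W) :
    R hV.choose = R W :=
  hl.measure_eq hV.choose_spec.1 hW (hV.choose_spec.2.symm.trans hVW)

variable (R l) in
noncomputable def Measure.extendEventually (hl : R.AbsolutelyContinuousFilter l) :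
    @Measure α (eventuallyMeasurableSpace m l) :=
  @Measure.ofMeasurable α (eventuallyMeasurableSpace m l) (fun _ hV => R hV.choose)
    ((EventuallyMeasurableSet.measure_choose_eq hl _ .empty (EventuallyEq.refl _ _)).trans
      measure_empty)
    (by
      intro f hf hd
      choose W hW hfW using id hf
      refine (EventuallyMeasurableSet.measure_choose_eq hl _ (.iUnion hW)
        (.countable_iUnion hfW)).trans ?_
      rw [measure_iUnion₀ (fun i j hij => hl.aedisjoint (hW i) (hW j) (hd hij)
          (hfW i).symm (hfW j).symm) fun i => (hW i).nullMeasurableSet]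
      exact tsum_congr fun i => (EventuallyMeasurableSet.measure_choose_eq hl _ (hW i)
        (hfW i)).symm)

theorem Measure.extendEventually_apply (hl : R.AbsolutelyContinuousFilter l)
    {V W : Set α} (hW : MeasurableSet W) (hVW : V =ᶠ[l] W) :
    R.extendEventually l hl V = R W := by
  have hV : EventuallyMeasurableSet m l V := ⟨W, hW, hVW⟩
  rw [Measure.extendEventually,
    @Measure.ofMeasurable_apply _ (eventuallyMeasurableSpace m l) _ _ _ _ hV]
  exact hV.measure_choose_eq hl hW hVW

end EventuallyMeasurable

variable {X Y : Type*} [MeasurableSpace Y] {Q : Measure Y} {𝔄y : Y → MeasurableSpace X}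
  {S : ∀ y, @Measure X (𝔄y y)}

variable (Q 𝔄y S) in
def sectionwiseAE : Filter (X × Y) :=
  (ae Q).bind fun y => map (·, y) (ae (S y))

instance : CountableInterFilter (sectionwiseAE Q 𝔄y S) := by
  unfold sectionwiseAE; infer_instance

theorem eventually_notMem_sectionwiseAE_iff {E : Set (X × Y)} :
    (∀ᶠ p in sectionwiseAE Q 𝔄y S, p ∉ E) ↔
      ∃ N, MeasurableSet N ∧ Q N = 0 ∧ ∀ y ∉ N, S y {x | (x, y) ∈ E} = 0 := by
  simp only [sectionwiseAE, eventually_bind, eventually_map, ae_iff, not_not]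
  exact ae_iff_exists_null

variable [MeasurableSpace X] {R : Measure (X × Y)}

variable (Q R 𝔄y S) in
structure IsDisintegration : Prop where
  isProbabilityMeasure : ∀ y, @IsProbabilityMeasure X (𝔄y y) (S y)
  ae_measurableSet : ∀ A : Set X, MeasurableSet A → ∀ᵐ y ∂Q, MeasurableSet[𝔄y y] A
  aemeasurable : ∀ A : Set X, MeasurableSet A → AEMeasurable (fun y ↦ S y A) Q
  setLIntegral_eq : ∀ (A : Set X) (B : Set Y), MeasurableSet A → MeasurableSet B →
    ∫⁻ y in B, S y A ∂Q = R (A ×ˢ B)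

variable (Q R 𝔄y S) in
structure SectionsIntegrate (E : Set (X × Y)) : Prop where
  ae_measurableSet : ∀ᵐ y ∂Q, MeasurableSet[𝔄y y] {x | (x, y) ∈ E}
  aemeasurable : AEMeasurable (fun y ↦ S y {x | (x, y) ∈ E}) Q
  lintegral_eq : ∫⁻ y, S y {x | (x, y) ∈ E} ∂Q = R E

theorem IsDisintegration.sectionsIntegrate_prod (hD : IsDisintegration Q 𝔄y S R) {A : Set X}
    {B : Set Y} (hA : MeasurableSet A) (hB : MeasurableSet B) :
    SectionsIntegrate Q 𝔄y S R (A ×ˢ B) := by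
  have hS : ∀ y, S y {x | (x, y) ∈ A ×ˢ B} = B.indicator (fun y ↦ S y A) y := fun y => by
    by_cases hy : y ∈ B <;> simp [hy]
  refine ⟨?_, ?_, ?_⟩
  · filter_upwards [hD.ae_measurableSet A hA] with y hy
    by_cases hyB : y ∈ B
    · simpa [hyB] using hy
    · simp [hyB]
  · rw [funext hS]
    exact (hD.aemeasurable A hA).indicator hB
  · rw [funext hS, lintegral_indicator hB, hD.setLIntegral_eq A B hA hB]

theorem SectionsIntegrate.compl [IsProbabilityMeasure Q] [IsProbabilityMeasure R]
    (hD : IsDisintegration Q 𝔄y S R) {E : Set (X × Y)} (hE : MeasurableSet E)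
    (h : SectionsIntegrate Q 𝔄y S R E) : SectionsIntegrate Q 𝔄y S R Eᶜ := by
  have hS : (fun y ↦ S y {x | (x, y) ∈ Eᶜ}) =ᵐ[Q] fun y ↦ 1 - S y {x | (x, y) ∈ E} := by
    filter_upwards [h.ae_measurableSet] with y hy
    have := hD.isProbabilityMeasure y
    exact prob_compl_eq_one_sub hy
  refine ⟨?_, (aemeasurable_const.sub h.aemeasurable).congr hS.symm, ?_⟩
  · filter_upwards [h.ae_measurableSet] with y hy
    exact hy.compl
  · have hle : ∀ y, S y {x | (x, y) ∈ E} ≤ 1 := fun y => by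
      have := hD.isProbabilityMeasure y
      exact prob_le_one
    rw [lintegral_congr_ae hS, lintegral_sub' h.aemeasurable (h.lintegral_eq ▸ measure_ne_top R E)
      (Eventually.of_forall hle), h.lintegral_eq, lintegral_one, measure_univ,
      prob_compl_eq_one_sub hE]

theorem sectionsIntegrate_iUnion {f : ℕ → Set (X × Y)} (hd : Pairwise (Disjoint on f))
    (hf : ∀ n, MeasurableSet (f n)) (h : ∀ n, SectionsIntegrate Q 𝔄y S R (f n)) :
    SectionsIntegrate Q 𝔄y S R (⋃ n, f n) := by
  have hmeas : ∀ᵐ y ∂Q, ∀ n, MeasurableSet[𝔄y y] {x | (x, y) ∈ f n} :=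
    ae_all_iff.2 fun n => (h n).ae_measurableSet
  have hS : (fun y ↦ S y {x | (x, y) ∈ ⋃ n, f n}) =ᵐ[Q]
      fun y ↦ ∑' n, S y {x | (x, y) ∈ f n} := by
    filter_upwards [hmeas] with y hy
    simp only [mem_iUnion, ofPred_exists]
    exact measure_iUnion (fun m n hmn => (hd hmn).preimage _) hy
  refine ⟨?_, (AEMeasurable.tsum fun n => (h n).aemeasurable).congr hS.symm, ?_⟩
  · filter_upwards [hmeas] with y hy
    simp only [mem_iUnion, ofPred_exists]
    exact MeasurableSet.iUnion hy
  · rw [lintegral_congr_ae hS, lintegral_tsum fun n => (h n).aemeasurable, measure_iUnion hd hf]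
    exact tsum_congr fun n => (h n).lintegral_eq

theorem IsDisintegration.sectionsIntegrate [IsProbabilityMeasure Q] [IsProbabilityMeasure R]
    (hD : IsDisintegration Q 𝔄y S R) {E : Set (X × Y)} (hE : MeasurableSet E) :
    SectionsIntegrate Q 𝔄y S R E := by
  induction E, hE using
    MeasurableSpace.induction_on_inter generateFrom_prod.symm isPiSystem_prod with
  | empty => simpa using hD.sectionsIntegrate_prod (B := ∅) .empty .empty
  | basic _ hE =>
    obtain ⟨A, hA, B, hB, rfl⟩ := hE
    exact hD.sectionsIntegrate_prod hA hB
  | compl E hE h => exact h.compl hD hE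
  | iUnion f hd hf h => exact sectionsIntegrate_iUnion hd hf h

theorem IsDisintegration.absolutelyContinuousFilter [IsProbabilityMeasure Q]
    [IsProbabilityMeasure R] (hD : IsDisintegration Q 𝔄y S R) :
    R.AbsolutelyContinuousFilter (sectionwiseAE Q 𝔄y S) := by
  intro E hE hEl
  obtain ⟨N, -, hN, hSN⟩ := eventually_notMem_sectionwiseAE_iff.1 hEl
  rw [← (hD.sectionsIntegrate hE).lintegral_eq, lintegral_congr_ae (g := fun _ ↦ 0),
    lintegral_zero]
  exact (measure_eq_zero_iff_ae_notMem.1 hN).mono hSN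

end MeasureTheory

theorem stmt6_general {X Y : Type*} [mX : MeasurableSpace X] [mY : MeasurableSpace Y]
    (Q : Measure Y) [IsProbabilityMeasure Q]
    (R : Measure (X × Y)) [IsProbabilityMeasure R]
    -- {(𝔄_y, S_y) : y ∈ Y} is a Q-disintegration of R
    (𝔄y : Y → MeasurableSpace X)
    (S : ∀ y, @Measure X (𝔄y y)) (hS : ∀ y, @IsProbabilityMeasure X (𝔄y y) (S y))
    (hDis1 : ∀ A : Set X, MeasurableSet A → ∃ N, MeasurableSet N ∧ Q N = 0 ∧
      (∀ y ∉ N, MeasurableSet[𝔄y y] A) ∧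
      ∃ g : Y → ENNReal, Measurable g ∧ ∀ y ∉ N, S y A = g y)
    (hDis2 : ∀ (A : Set X) (B : Set Y), MeasurableSet A → MeasurableSet B →
      ∫⁻ y in B, S y A ∂Q = R (A ×ˢ B))
    -- the σ-ideal ℳ of left nil sets
    (memM : Set (X × Y) → Prop)
    (hmemM : ∀ E, memM E ↔
      ∃ N, MeasurableSet N ∧ Q N = 0 ∧ ∀ y ∉ N, S y {x | (x, y) ∈ E} = 0)
    -- the family 𝔄⊙𝔅
    (AoB : Set (Set (X × Y)))
    (hAoB : ∀ V, V ∈ AoB ↔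
      ∃ W N, MeasurableSet W ∧ memM N ∧ V = symmDiff W N) :
    -- 𝔄⊙𝔅 is a σ-algebra containing 𝔄 ⊗ 𝔅
    (∀ W : Set (X × Y), MeasurableSet W → W ∈ AoB) ∧
    (univ : Set (X × Y)) ∈ AoB ∧
    (∀ V ∈ AoB, Vᶜ ∈ AoB) ∧
    (∀ f : ℕ → Set (X × Y), (∀ n, f n ∈ AoB) → (⋃ n, f n) ∈ AoB) ∧
    -- R̂_⊙(W △ N) := R(W) is a well-defined countably additive probability on 𝔄⊙𝔅
    ∃ Rd : Set (X × Y) → ENNReal,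
      (∀ W N, MeasurableSet W → memM N → Rd (symmDiff W N) = R W) ∧
      Rd ∅ = 0 ∧ Rd univ = 1 ∧
      (∀ f : ℕ → Set (X × Y), (∀ n, f n ∈ AoB) →
        Pairwise (Function.onFun Disjoint f) → Rd (⋃ n, f n) = ∑' n, Rd (f n)) := by
  have hD : IsDisintegration Q 𝔄y S R := by
    refine ⟨hS, fun A hA => ?_, fun A hA => ?_, hDis2⟩ <;>
      obtain ⟨N, hN, hN0, hA, g, hg, hgA⟩ := hDis1 A hA
    exacts [ae_iff_exists_null.2 ⟨N, hN, hN0, hA⟩,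
      ⟨g, hg, ae_iff_exists_null.2 ⟨N, hN, hN0, hgA⟩⟩]
  set l := sectionwiseAE Q 𝔄y S
  have hl : R.AbsolutelyContinuousFilter l := hD.absolutelyContinuousFilter
  have hmemM' : ∀ N, memM N ↔ ∀ᶠ p in l, p ∉ N := fun N => by
    rw [hmemM, eventually_notMem_sectionwiseAE_iff]
  have hAoB' : ∀ V, V ∈ AoB ↔ EventuallyMeasurableSet Prod.instMeasurableSpace l V := by
    intro V
    simp only [hAoB, hmemM', exists_and_left, exists_eq_symmDiff_iff_eventuallyEq]
    rfl
  simp only [hAoB']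
  refine ⟨fun W hW => hW.eventuallyMeasurableSet, MeasurableSet.univ.eventuallyMeasurableSet,
    fun V hV => hV.compl, fun f hf => .iUnion hf, R.extendEventually l hl, ?_, measure_empty, ?_,
    fun f hf hd => measure_iUnion hd hf⟩
  · exact fun W N hW hN => R.extendEventually_apply hl hW
      (exists_eq_symmDiff_iff_eventuallyEq.1 ⟨N, (hmemM' N).1 hN, rfl⟩)
  · exact (R.extendEventually_apply hl .univ (EventuallyEq.refl _ _)).trans measure_univ

theorem stmt6 {X Y : Type*} [mX : MeasurableSpace X] [mY : MeasurableSpace Y]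
    (P : Measure X) (Q : Measure Y) [IsProbabilityMeasure P] [IsProbabilityMeasure Q]
    (R : Measure (X × Y)) [IsProbabilityMeasure R]
    -- R has marginals P and Q
    (hRP : ∀ A, MeasurableSet A → R (A ×ˢ (univ : Set Y)) = P A)
    (hRQ : ∀ B, MeasurableSet B → R ((univ : Set X) ×ˢ B) = Q B)
    -- {(𝔄_y, S_y) : y ∈ Y} is a Q-disintegration of R
    (𝔄y : Y → MeasurableSpace X) (hsub : ∀ y, 𝔄y y ≤ mX)
    (S : ∀ y, @Measure X (𝔄y y)) (hS : ∀ y, @IsProbabilityMeasure X (𝔄y y) (S y))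
    (hDis1 : ∀ A : Set X, MeasurableSet A → ∃ N, MeasurableSet N ∧ Q N = 0 ∧
      (∀ y ∉ N, MeasurableSet[𝔄y y] A) ∧
      ∃ g : Y → ENNReal, Measurable g ∧ ∀ y ∉ N, S y A = g y)
    (hDis2 : ∀ (A : Set X) (B : Set Y), MeasurableSet A → MeasurableSet B →
      ∫⁻ y in B, S y A ∂Q = R (A ×ˢ B))
    -- the σ-ideal ℳ of left nil sets
    (memM : Set (X × Y) → Prop)
    (hmemM : ∀ E, memM E ↔
      ∃ N, MeasurableSet N ∧ Q N = 0 ∧ ∀ y ∉ N, S y {x | (x, y) ∈ E} = 0)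
    -- the family 𝔄⊙𝔅
    (AoB : Set (Set (X × Y)))
    (hAoB : ∀ V, V ∈ AoB ↔
      ∃ W N, MeasurableSet W ∧ memM N ∧ V = symmDiff W N) :
    -- 𝔄⊙𝔅 is a σ-algebra containing 𝔄 ⊗ 𝔅
    (∀ W : Set (X × Y), MeasurableSet W → W ∈ AoB) ∧
    (univ : Set (X × Y)) ∈ AoB ∧
    (∀ V ∈ AoB, Vᶜ ∈ AoB) ∧
    (∀ f : ℕ → Set (X × Y), (∀ n, f n ∈ AoB) → (⋃ n, f n) ∈ AoB) ∧
    -- R̂_⊙(W △ N) := R(W) is a well-defined countably additive probability on 𝔄⊙𝔅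
    ∃ Rd : Set (X × Y) → ENNReal,
      (∀ W N, MeasurableSet W → memM N → Rd (symmDiff W N) = R W) ∧
      Rd ∅ = 0 ∧ Rd univ = 1 ∧
      (∀ f : ℕ → Set (X × Y), (∀ n, f n ∈ AoB) →
        Pairwise (Function.onFun Disjoint f) → Rd (⋃ n, f n) = ∑' n, Rd (f n)) :=
  stmt6_general (mX := mX) (mY := mY) Q R 𝔄y S hS hDis1 hDis2 memM hmemM AoB hAoB
end

section
/- Let (X, 𝔄, P) and (Y, 𝔅, Q) be probability spaces, R a probability on 𝔄 ⊗ 𝔅 with marginals P and Q, and {(𝔄_y, S_y) : y ∈ Y} a Q-disintegration of R. If E ∈ 𝔄⊙𝔅 (the σ-algebra generated by 𝔄 ⊗ 𝔅 and the σ-ideal ℳ of left nil sets), then R̂_⊙(E) = ∫_Y Ŝ_y(E^y) dQ̂(y); in particular y ↦ Ŝ_y(E^y) is Q̂-measurable. -/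
open MeasureTheory Set Function

/-! By (Dis1) and (Dis2) every rectangle `A ×ˢ B` has almost all sections
`𝔄_y`-measurable and satisfies `R (A ×ˢ B) = ∫ S_y((A ×ˢ B)^y) dQ(y)`. Both properties survive
proper differences (the measures being finite) and countable disjoint unions, so by Dynkin's
π-λ theorem they hold on all of `𝔄 ⊗ 𝔅`. For `E = W △ N` with `N` a left nil set,
`S_y(E^y) = S_y(W^y)` whenever `S_y(N^y) = 0`, that is for `Q`-almost every `y`. -/

theorem measure_preimage_symmDiff_of_null {α β : Type*} {_ : MeasurableSpace α} {μ : Measure α}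
    {f : α → β} {s t : Set β} (ht : μ (f ⁻¹' t) = 0) :
    μ (f ⁻¹' symmDiff s t) = μ (f ⁻¹' s) := by
  refine measure_congr (measure_symmDiff_eq_zero_iff.1 ?_)
  rwa [← preimage_symmDiff, symmDiff_symmDiff_self']

section Disintegration

variable {X Y : Type*} [MeasurableSpace X] [MeasurableSpace Y]

def DisintegratesOn (𝔄y : Y → MeasurableSpace X) (S : ∀ y, @Measure X (𝔄y y))
    (Q : Measure Y) (R : Measure (X × Y)) (W : Set (X × Y)) : Prop :=
  (∀ᵐ y ∂Q, MeasurableSet[𝔄y y] ((·, y) ⁻¹' W)) ∧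
    AEMeasurable (fun y => S y ((·, y) ⁻¹' W)) Q ∧ ∫⁻ y, S y ((·, y) ⁻¹' W) ∂Q = R W

variable {𝔄y : Y → MeasurableSpace X} {S : ∀ y, @Measure X (𝔄y y)} {Q : Measure Y}
  {R : Measure (X × Y)}

theorem disintegratesOn_empty : DisintegratesOn 𝔄y S Q R ∅ :=
  ⟨.of_forall fun y => @MeasurableSet.empty _ (𝔄y y), by simp [aemeasurable_const], by simp⟩

theorem disintegratesOn_prod {A : Set X} {B : Set Y} (hB : MeasurableSet B)
    (hA : ∀ᵐ y ∂Q, MeasurableSet[𝔄y y] A) (hSA : AEMeasurable (fun y => S y A) Q)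
    (hR : ∫⁻ y in B, S y A ∂Q = R (A ×ˢ B)) : DisintegratesOn 𝔄y S Q R (A ×ˢ B) := by
  classical
  have hS : ∀ y, S y ((·, y) ⁻¹' A ×ˢ B) = B.indicator (fun y => S y A) y := by
    intro y
    rw [mk_preimage_prod_left_eq_if]
    split_ifs with hy <;> simp [hy]
  refine ⟨?_, ?_, ?_⟩
  · filter_upwards [hA] with y hy
    rw [mk_preimage_prod_left_eq_if]
    split_ifs
    exacts [hy, @MeasurableSet.empty _ (𝔄y y)]
  · simp_rw [hS]
    exact hSA.indicator hB
  · simp_rw [hS]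
    rw [lintegral_indicator hB, hR]

theorem DisintegratesOn.diff [∀ y, IsFiniteMeasure (S y)] [IsFiniteMeasure R]
    {V W : Set (X × Y)} (hV : DisintegratesOn 𝔄y S Q R V) (hW : DisintegratesOn 𝔄y S Q R W)
    (hWV : W ⊆ V) (hWm : MeasurableSet W) : DisintegratesOn 𝔄y S Q R (V \ W) := by
  obtain ⟨hVsec, hVm, hVint⟩ := hV
  obtain ⟨hWsec, hWm', hWint⟩ := hW
  have hS : ∀ᵐ y ∂Q,
      S y ((·, y) ⁻¹' (V \ W)) = S y ((·, y) ⁻¹' V) - S y ((·, y) ⁻¹' W) := by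
    filter_upwards [hWsec] with y hy
    exact measure_sdiff (preimage_mono hWV) hy.nullMeasurableSet (measure_ne_top _ _)
  have hle : ∀ᵐ y ∂Q, S y ((·, y) ⁻¹' W) ≤ S y ((·, y) ⁻¹' V) :=
    .of_forall fun y => measure_mono (preimage_mono hWV)
  refine ⟨?_, (hVm.sub hWm').congr (hS.mono fun _ h => h.symm), ?_⟩
  · filter_upwards [hVsec, hWsec] with y hVy hWy
    exact hVy.diff hWy
  · rw [lintegral_congr_ae hS, lintegral_sub' hWm' (hWint ▸ measure_ne_top _ _) hle, hVint,
      hWint, measure_sdiff hWV hWm.nullMeasurableSet (measure_ne_top _ _)]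

theorem disintegratesOn_iUnion {f : ℕ → Set (X × Y)}
    (hdisj : Pairwise (Disjoint on f)) (hfm : ∀ i, MeasurableSet (f i))
    (hf : ∀ i, DisintegratesOn 𝔄y S Q R (f i)) :
    DisintegratesOn 𝔄y S Q R (⋃ i, f i) := by
  choose hsec hm hint using hf
  have hsec' : ∀ᵐ y ∂Q, ∀ i, MeasurableSet[𝔄y y] ((·, y) ⁻¹' f i) :=
    ae_all_iff.2 hsec
  have hS : ∀ᵐ y ∂Q, S y ((·, y) ⁻¹' ⋃ i, f i) = ∑' i, S y ((·, y) ⁻¹' f i) := by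
    filter_upwards [hsec'] with y hy
    rw [preimage_iUnion]
    exact measure_iUnion (fun i j hij => (hdisj hij).preimage _) hy
  refine ⟨?_, (AEMeasurable.tsum hm).congr (hS.mono fun _ h => h.symm), ?_⟩
  · filter_upwards [hsec'] with y hy
    rw [preimage_iUnion]
    exact MeasurableSet.iUnion hy
  · rw [lintegral_congr_ae hS, lintegral_tsum hm, measure_iUnion hdisj hfm]
    exact tsum_congr hint

theorem DisintegratesOn.of_measurableSet [∀ y, IsFiniteMeasure (S y)]
    [IsFiniteMeasure R] (hprod : ∀ A B, MeasurableSet A → MeasurableSet B →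
      DisintegratesOn 𝔄y S Q R (A ×ˢ B))
    {W : Set (X × Y)} (hW : MeasurableSet W) : DisintegratesOn 𝔄y S Q R W := by
  induction W, hW using
    MeasurableSpace.induction_on_inter generateFrom_prod.symm isPiSystem_prod with
  | empty => exact disintegratesOn_empty
  | basic W hW =>
    obtain ⟨A, hA, B, hB, rfl⟩ := hW
    exact hprod A B hA hB
  | compl W hWm hW =>
    have huniv : DisintegratesOn 𝔄y S Q R univ := univ_prod_univ ▸ hprod univ univ .univ .univ
    rw [compl_eq_univ_sdiff]
    exact huniv.diff hW (subset_univ W) hWm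
  | iUnion f hdisj hfm hf => exact disintegratesOn_iUnion hdisj hfm hf

end Disintegration

theorem stmt7_general {X Y : Type*} [mX : MeasurableSpace X] [mY : MeasurableSpace Y]
    (Q : Measure Y)
    (R : Measure (X × Y)) [IsProbabilityMeasure R]
    (𝔄y : Y → MeasurableSpace X)
    (S : ∀ y, @Measure X (𝔄y y)) (hS : ∀ y, @IsProbabilityMeasure X (𝔄y y) (S y))
    (hDis1 : ∀ A : Set X, MeasurableSet A → ∃ N, MeasurableSet N ∧ Q N = 0 ∧
      (∀ y ∉ N, MeasurableSet[𝔄y y] A) ∧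
      ∃ g : Y → ENNReal, Measurable g ∧ ∀ y ∉ N, S y A = g y)
    (hDis2 : ∀ (A : Set X) (B : Set Y), MeasurableSet A → MeasurableSet B →
      ∫⁻ y in B, S y A ∂Q = R (A ×ˢ B))
    (memM : Set (X × Y) → Prop)
    (hmemM : ∀ E, memM E ↔
      ∃ N, MeasurableSet N ∧ Q N = 0 ∧ ∀ y ∉ N, S y {x | (x, y) ∈ E} = 0)
    -- the measure R̂_⊙, determined by its values on sets W △ N
    (Rd : Set (X × Y) → ENNReal)
    (hRd : ∀ W N, MeasurableSet W → memM N → Rd (symmDiff W N) = R W)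
    -- a set E ∈ 𝔄⊙𝔅
    (E : Set (X × Y))
    (hE : ∃ W N, MeasurableSet W ∧ memM N ∧ E = symmDiff W N) :
    -- y ↦ Ŝ_y(E^y) is measurable for the completion of Q, i.e. a.e.-measurable
    AEMeasurable (fun y => S y {x | (x, y) ∈ E}) Q ∧
    Rd E = ∫⁻ y, S y {x | (x, y) ∈ E} ∂Q := by
  obtain ⟨W, M, hW, hM, rfl⟩ := hE
  have : ∀ y, IsFiniteMeasure (S y) := fun y => inferInstance
  have hprod : ∀ A B, MeasurableSet A → MeasurableSet B →
      DisintegratesOn 𝔄y S Q R (A ×ˢ B) := by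
    intro A B hA hB
    obtain ⟨N, -, hN, hA𝔄, g, hg, hSg⟩ := hDis1 A hA
    have hN' : ∀ᵐ y ∂Q, y ∉ N := measure_eq_zero_iff_ae_notMem.1 hN
    exact disintegratesOn_prod hB (hN'.mono hA𝔄)
      (hg.aemeasurable.congr (hN'.mono fun y hy => (hSg y hy).symm)) (hDis2 A B hA hB)
  obtain ⟨-, hWm, hWint⟩ := DisintegratesOn.of_measurableSet hprod hW
  obtain ⟨N, -, hN, hMnull⟩ := (hmemM M).1 hM
  have hEW :
      (fun y => S y {x | (x, y) ∈ symmDiff W M}) =ᵐ[Q] fun y => S y ((·, y) ⁻¹' W) := by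
    filter_upwards [measure_eq_zero_iff_ae_notMem.1 hN] with y hy
    exact measure_preimage_symmDiff_of_null (hMnull y hy)
  exact ⟨hWm.congr hEW.symm, by rw [hRd W M hW hM, lintegral_congr_ae hEW, hWint]⟩

theorem stmt7 {X Y : Type*} [mX : MeasurableSpace X] [mY : MeasurableSpace Y]
    (P : Measure X) (Q : Measure Y) [IsProbabilityMeasure P] [IsProbabilityMeasure Q]
    (R : Measure (X × Y)) [IsProbabilityMeasure R]
    (hRP : ∀ A, MeasurableSet A → R (A ×ˢ (univ : Set Y)) = P A)
    (hRQ : ∀ B, MeasurableSet B → R ((univ : Set X) ×ˢ B) = Q B)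
    (𝔄y : Y → MeasurableSpace X) (hsub : ∀ y, 𝔄y y ≤ mX)
    (S : ∀ y, @Measure X (𝔄y y)) (hS : ∀ y, @IsProbabilityMeasure X (𝔄y y) (S y))
    (hDis1 : ∀ A : Set X, MeasurableSet A → ∃ N, MeasurableSet N ∧ Q N = 0 ∧
      (∀ y ∉ N, MeasurableSet[𝔄y y] A) ∧
      ∃ g : Y → ENNReal, Measurable g ∧ ∀ y ∉ N, S y A = g y)
    (hDis2 : ∀ (A : Set X) (B : Set Y), MeasurableSet A → MeasurableSet B →
      ∫⁻ y in B, S y A ∂Q = R (A ×ˢ B))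
    (memM : Set (X × Y) → Prop)
    (hmemM : ∀ E, memM E ↔
      ∃ N, MeasurableSet N ∧ Q N = 0 ∧ ∀ y ∉ N, S y {x | (x, y) ∈ E} = 0)
    -- the measure R̂_⊙, determined by its values on sets W △ N
    (Rd : Set (X × Y) → ENNReal)
    (hRd : ∀ W N, MeasurableSet W → memM N → Rd (symmDiff W N) = R W)
    -- a set E ∈ 𝔄⊙𝔅
    (E : Set (X × Y))
    (hE : ∃ W N, MeasurableSet W ∧ memM N ∧ E = symmDiff W N) :
    -- y ↦ Ŝ_y(E^y) is measurable for the completion of Q, i.e. a.e.-measurable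
    AEMeasurable (fun y => S y {x | (x, y) ∈ E}) Q ∧
    Rd E = ∫⁻ y, S y {x | (x, y) ∈ E} ∂Q :=
  stmt7_general (mX := mX) (mY := mY) Q R 𝔄y S hS hDis1 hDis2 memM hmemM Rd hRd E hE
end

section
/- Let (X, 𝔄, P) and (Y, 𝔅, Q) be probability spaces, R ∈ P·Q (a probability on 𝔄 ⊗ 𝔅 with marginals P, Q), and {(𝔄_y, S_y) : y ∈ Y} a Q-disintegration of R. If f : X × Y → ℝ is bounded and measurable with respect to 𝔄⊙𝔅 (so in particular with respect to the completion of 𝔄 ⊗ 𝔅 under R), then: (a) for Q-almost every y ∈ Y, the section f^y = f(·, y) is measurable with respect to the completion of 𝔄_y under S_y; (b) if f = 0 R̂_⊙-almost everywhere, then for Q-almost every y, f^y = 0 Ŝ_y-almost everywhere; and (c) ∫_{X×Y} f dR̂_⊙ = ∫_Y (∫_X f^y dŜ_y) dQ̂(y). -/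
/-!
For a product-measurable set `W`, the sections `W^y` are `Ŝ_y`-measurable for `Q`-a.e. `y`, and
`y ↦ S_y(W^y)` is `Q`-a.e. measurable with integral `R(W)`: this holds for rectangles by (Dis1)
and (Dis2), and the class of such `W` is closed under complements and countable disjoint unions,
so the π-λ theorem applies.

On `𝔄⊙𝔅` the measure `R̂_⊙` agrees with the outer measure `R*`, so every `V ∈ 𝔄⊙𝔅` satisfies
`R*(V) + R*(Vᶜ) = R(X × Y) < ∞` and lies in the `R`-completion: `V = H △ N` with `H`
product-measurable and `N` inside an `R`-null product-measurable `Z`. The formula for `Z` shows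
that `N^y` is `S_y`-null for a.e. `y`, so the property passes to `V`, with integral
`R(H) = R̂_⊙(V)`. Preimages of a countable generating family of Borel sets give (a), and `{f ≠ 0}`
gives (b). Approximation by simple functions extends the formula to nonnegative functions, and
(c) follows by splitting `f` into its positive and negative parts.
-/

open MeasureTheory Set Function

open scoped ENNReal symmDiff

namespace MeasureTheory

theorem nullMeasurableSet_of_measure_add_measure_compl {α : Type*} [MeasurableSpace α]
    {μ : Measure α} {s : Set α} (h : μ s + μ sᶜ = μ univ) (hfin : μ univ ≠ ∞) :
    NullMeasurableSet s μ := by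
  set T := toMeasurable μ s
  set T' := toMeasurable μ sᶜ
  have hunion : T ∪ T' = univ :=
    eq_univ_of_forall fun x => (em (x ∈ s)).imp (subset_toMeasurable μ s ·)
      (subset_toMeasurable μ sᶜ ·)
  have hinter : μ (T ∩ T') = 0 := by
    have := measure_union_add_inter (μ := μ) T (measurableSet_toMeasurable μ sᶜ)
    rw [hunion, measure_toMeasurable, measure_toMeasurable, h] at this
    exact (ENNReal.add_right_inj hfin).1 (this.trans (add_zero _).symm)
  have hTs : T =ᵐ[μ] s := ae_eq_set.2
    ⟨measure_mono_null (fun x (hx : x ∈ T \ s) =>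
      (⟨hx.1, subset_toMeasurable μ sᶜ hx.2⟩ : x ∈ T ∩ T')) hinter,
      by rw [sdiff_eq_empty.2 (subset_toMeasurable μ s), measure_empty]⟩
  exact (measurableSet_toMeasurable μ s).nullMeasurableSet.congr hTs

variable {X Y : Type*} [MeasurableSpace Y] {𝔄y : Y → MeasurableSpace X}
  {S : ∀ y, Measure[𝔄y y] X} {Q : Measure Y}

def SectionsIntegrateTo (Q : Measure Y) (S : ∀ y, Measure[𝔄y y] X) (V : Set (X × Y))
    (c : ℝ≥0∞) : Prop :=
  (∀ᵐ y ∂Q, @NullMeasurableSet X (𝔄y y) {x | (x, y) ∈ V} (S y)) ∧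
    AEMeasurable (fun y => S y {x | (x, y) ∈ V}) Q ∧ ∫⁻ y, S y {x | (x, y) ∈ V} ∂Q = c

namespace SectionsIntegrateTo

theorem compl {V : Set (X × Y)} {c : ℝ≥0∞} (h : SectionsIntegrateTo Q S V c)
    (hS : ∀ y, IsProbabilityMeasure (S y)) (hc : c ≠ ∞) :
    SectionsIntegrateTo Q S Vᶜ (Q univ - c) := by
  obtain ⟨hnull, hmeas, hint⟩ := h
  have hcompl : ∀ᵐ y ∂Q, S y {x | (x, y) ∈ Vᶜ} = 1 - S y {x | (x, y) ∈ V} := by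
    filter_upwards [hnull] with y hy using prob_compl_eq_one_sub₀ hy
  refine ⟨by filter_upwards [hnull] with y hy using hy.compl,
    (aemeasurable_const.sub hmeas).congr (hcompl.mono fun _ h => h.symm), ?_⟩
  rw [lintegral_congr_ae hcompl, lintegral_sub' hmeas (hint ▸ hc)
    (ae_of_all _ fun _ => prob_le_one), lintegral_one, hint]

theorem iUnion {ι : Type*} [Countable ι] {V : ι → Set (X × Y)} {c : ι → ℝ≥0∞}
    (h : ∀ i, SectionsIntegrateTo Q S (V i) (c i)) (hV : Pairwise (Disjoint on V)) :
    SectionsIntegrateTo Q S (⋃ i, V i) (∑' i, c i) := by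
  choose hnull hmeas hint using h
  have hsec (y : Y) : {x | (x, y) ∈ ⋃ i, V i} = ⋃ i, {x | (x, y) ∈ V i} := by ext; simp
  have hnull' : ∀ᵐ y ∂Q, ∀ i, @NullMeasurableSet X (𝔄y y) {x | (x, y) ∈ V i} (S y) :=
    ae_all_iff.2 hnull
  have hsum : ∀ᵐ y ∂Q, S y {x | (x, y) ∈ ⋃ i, V i} = ∑' i, S y {x | (x, y) ∈ V i} := by
    filter_upwards [hnull'] with y hy
    rw [hsec]
    exact measure_iUnion₀ (fun i j hij => ((hV hij).preimage _).aedisjoint) hy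
  refine ⟨by filter_upwards [hnull'] with y hy; rw [hsec]; exact .iUnion hy,
    (AEMeasurable.tsum hmeas).congr (hsum.mono fun _ h => h.symm), ?_⟩
  rw [lintegral_congr_ae hsum, lintegral_tsum hmeas]
  exact tsum_congr hint

theorem symmDiff_null {W N : Set (X × Y)} {c : ℝ≥0∞} (h : SectionsIntegrateTo Q S W c)
    (hN : ∀ᵐ y ∂Q, S y {x | (x, y) ∈ N} = 0) : SectionsIntegrateTo Q S (W ∆ N) c := by
  obtain ⟨hnull, hmeas, hint⟩ := h
  have hsec (y : Y) : {x | (x, y) ∈ W ∆ N} = {x | (x, y) ∈ W} ∆ {x | (x, y) ∈ N} := rfl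
  have heq : ∀ᵐ y ∂Q, S y {x | (x, y) ∈ W ∆ N} = S y {x | (x, y) ∈ W} := by
    filter_upwards [hN] with y hy
    rw [hsec]
    exact measure_congr <| (ae_eq_set_symmDiff (ae_eq_refl _) (ae_eq_empty.2 hy)).trans
      (symmDiff_bot _).eventuallyEq
  refine ⟨?_, hmeas.congr (heq.mono fun _ h => h.symm), by rwa [lintegral_congr_ae heq]⟩
  filter_upwards [hnull, hN] with y hW hN
  rw [hsec]
  exact hW.symmDiff (.of_null hN)

end SectionsIntegrateTo

def Disintegrates {m : MeasurableSpace (X × Y)} (ρ : Measure[m] (X × Y)) (Q : Measure Y)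
    (S : ∀ y, Measure[𝔄y y] X) : Prop :=
  ∀ ⦃V⦄, MeasurableSet[m] V → SectionsIntegrateTo Q S V (ρ V)

namespace Disintegrates

variable {m : MeasurableSpace (X × Y)} {ρ : Measure[m] (X × Y)}

theorem of_measure_eq {m₀ : MeasurableSpace (X × Y)} {R : Measure[m₀] (X × Y)}
    [IsFiniteMeasure R] (h : Disintegrates R Q S) (hρ : ∀ V, MeasurableSet[m] V → ρ V = R V) :
    Disintegrates ρ Q S := by
  intro V hV
  have hVnull : NullMeasurableSet V R := nullMeasurableSet_of_measure_add_measure_compl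
    (by rw [← hρ V hV, ← hρ Vᶜ hV.compl, measure_add_measure_compl hV, hρ univ .univ])
    (measure_ne_top R univ)
  obtain ⟨Z, hZsub, hZ, hRZ⟩ :=
    exists_measurable_superset_of_null (measure_symmDiff_eq_zero_iff.2 hVnull.toMeasurable_ae_eq)
  obtain ⟨-, hmeasZ, hintZ⟩ := h hZ
  have hnull : ∀ᵐ y ∂Q, S y {x | (x, y) ∈ toMeasurable R V ∆ V} = 0 := by
    filter_upwards [(lintegral_eq_zero_iff' hmeasZ).1 (hintZ.trans hRZ)] with y hy
    exact measure_mono_null (fun x hx => hZsub hx) hy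
  have := (h (measurableSet_toMeasurable R V)).symmDiff_null hnull
  rwa [symmDiff_symmDiff_cancel_left, measure_toMeasurable, ← hρ V hV] at this

theorem ae_nullMeasurable_section (h : Disintegrates ρ Q S) {β : Type*} [MeasurableSpace β]
    [hβ : MeasurableSpace.CountablyGenerated β] {g : X × Y → β} (hg : Measurable[m] g) :
    ∀ᵐ y ∂Q, @NullMeasurable X β (𝔄y y) _ (fun x => g (x, y)) (S y) := by
  obtain ⟨b, hb, rfl⟩ := hβ.isCountablyGenerated
  have hae : ∀ᵐ y ∂Q, ∀ s ∈ b, @NullMeasurableSet X (𝔄y y) {x | (x, y) ∈ g ⁻¹' s} (S y) :=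
    (ae_ball_iff hb).2 fun s hs => (h (hg (.basic s hs))).1
  filter_upwards [hae] with y hy
  exact @measurable_generateFrom _ _ (NullMeasurableSpace.instMeasurableSpace) _ _ hy

theorem aemeasurable_and_lintegral_eq (h : Disintegrates ρ Q S) {g : X × Y → ℝ≥0∞}
    (hg : Measurable[m] g) :
    AEMeasurable (fun y => ∫⁻ x, g (x, y) ∂S y) Q ∧
      ∫⁻ p, g p ∂ρ = ∫⁻ y, ∫⁻ x, g (x, y) ∂S y ∂Q := by
  have hsec (g : X × Y → ℝ≥0∞) (hg : Measurable[m] g) :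
      ∀ᵐ y ∂Q, AEMeasurable (fun x => g (x, y)) (S y) := by
    filter_upwards [h.ae_nullMeasurable_section hg] with y hy using hy.aemeasurable
  refine Measurable.ennreal_induction (α := X × Y) (motive := fun g =>
    AEMeasurable (fun y => ∫⁻ x, g (x, y) ∂S y) Q ∧
      ∫⁻ p, g p ∂ρ = ∫⁻ y, ∫⁻ x, g (x, y) ∂S y ∂Q) ?_ ?_ ?_ hg
  · intro c V hV
    obtain ⟨hnull, hmeas, hint⟩ := h hV
    have hinner : (fun y => ∫⁻ x, V.indicator (fun _ => c) (x, y) ∂S y)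
        =ᵐ[Q] fun y => c * S y {x | (x, y) ∈ V} := by
      filter_upwards [hnull] with y hy
      exact lintegral_indicator_const₀ hy c
    refine ⟨(hmeas.const_mul c).congr hinner.symm, ?_⟩
    rw [lintegral_indicator_const hV, lintegral_congr_ae hinner,
      lintegral_const_mul'' c hmeas, hint]
  · intro g₁ g₂ _ hg₁ _ ih₁ ih₂
    have hinner : (fun y => ∫⁻ x, (g₁ + g₂) (x, y) ∂S y)
        =ᵐ[Q] fun y => ∫⁻ x, g₁ (x, y) ∂S y + ∫⁻ x, g₂ (x, y) ∂S y := by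
      filter_upwards [hsec g₁ hg₁] with y hy using lintegral_add_left' hy _
    refine ⟨(ih₁.1.add ih₂.1).congr hinner.symm, ?_⟩
    rw [lintegral_congr_ae hinner, lintegral_add_left' ih₁.1, ← ih₁.2, ← ih₂.2]
    exact lintegral_add_left hg₁ _
  · intro gs hgs hmono ih
    have hinner : (fun y => ∫⁻ x, ⨆ n, gs n (x, y) ∂S y)
        =ᵐ[Q] fun y => ⨆ n, ∫⁻ x, gs n (x, y) ∂S y := by
      filter_upwards [ae_all_iff.2 fun n => hsec (gs n) (hgs n)] with y hy
      exact lintegral_iSup' hy (ae_of_all _ fun x _ _ hnk => hmono hnk (x, y))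
    refine ⟨(AEMeasurable.iSup fun n => (ih n).1).congr hinner.symm, ?_⟩
    rw [lintegral_congr_ae hinner, lintegral_iSup' (fun n => (ih n).1)
      (ae_of_all _ fun y _ _ hnk => lintegral_mono fun x => hmono hnk (x, y)),
      lintegral_iSup hgs hmono]
    exact iSup_congr fun n => (ih n).2

theorem ae_integrable_section (h : Disintegrates ρ Q S) {f : X × Y → ℝ} (hf : Measurable[m] f)
    (hfi : Integrable f ρ) : ∀ᵐ y ∂Q, Integrable (fun x => f (x, y)) (S y) := by
  obtain ⟨hmeas, hint⟩ := h.aemeasurable_and_lintegral_eq hf.enorm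
  filter_upwards [h.ae_nullMeasurable_section hf, ae_lt_top' hmeas (hint ▸ hfi.2.ne)]
    with y hmeas hfin
  exact ⟨hmeas.aemeasurable.aestronglyMeasurable, hfin⟩

theorem integral_eq_integral_integral (h : Disintegrates ρ Q S) {f : X × Y → ℝ}
    (hf : Measurable[m] f) (hfi : Integrable f ρ) :
    ∫ p, f p ∂ρ = ∫ y, ∫ x, f (x, y) ∂S y ∂Q := by
  obtain ⟨hmeasPos, hintPos⟩ := h.aemeasurable_and_lintegral_eq hf.ennreal_ofReal
  obtain ⟨hmeasNeg, hintNeg⟩ :=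
    h.aemeasurable_and_lintegral_eq (g := fun p => ENNReal.ofReal (-f p)) hf.neg.ennreal_ofReal
  have hfinPos := hintPos ▸ hfi.lintegral_lt_top.ne
  have hfinNeg := hintNeg ▸ hfi.neg.lintegral_lt_top.ne
  calc ∫ p, f p ∂ρ
      = (∫⁻ p, ENNReal.ofReal (f p) ∂ρ).toReal - (∫⁻ p, ENNReal.ofReal (-f p) ∂ρ).toReal :=
        integral_eq_lintegral_pos_part_sub_lintegral_neg_part hfi
    _ = (∫ y, (∫⁻ x, ENNReal.ofReal (f (x, y)) ∂S y).toReal ∂Q)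
          - ∫ y, (∫⁻ x, ENNReal.ofReal (-f (x, y)) ∂S y).toReal ∂Q := by
        rw [integral_toReal hmeasPos (ae_lt_top' hmeasPos hfinPos),
          integral_toReal hmeasNeg (ae_lt_top' hmeasNeg hfinNeg), hintPos, hintNeg]
    _ = ∫ y, ((∫⁻ x, ENNReal.ofReal (f (x, y)) ∂S y).toReal
          - (∫⁻ x, ENNReal.ofReal (-f (x, y)) ∂S y).toReal) ∂Q :=
        (integral_sub (integrable_toReal_of_lintegral_ne_top hmeasPos hfinPos)
          (integrable_toReal_of_lintegral_ne_top hmeasNeg hfinNeg)).symm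
    _ = ∫ y, ∫ x, f (x, y) ∂S y ∂Q := integral_congr_ae <| by
        filter_upwards [h.ae_integrable_section hf hfi] with y hy
        exact (integral_eq_lintegral_pos_part_sub_lintegral_neg_part hy).symm

end Disintegrates

variable [MeasurableSpace X]

structure IsDisintegration_s8 (Q : Measure Y) (R : Measure (X × Y)) (𝔄y : Y → MeasurableSpace X)
    (S : ∀ y, Measure[𝔄y y] X) : Prop where
  isProbabilityMeasure : ∀ y, IsProbabilityMeasure (S y)
  ae_measurableSet : ∀ ⦃A : Set X⦄, MeasurableSet A → ∀ᵐ y ∂Q, MeasurableSet[𝔄y y] A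
  aemeasurable_measure : ∀ ⦃A : Set X⦄, MeasurableSet A → AEMeasurable (fun y => S y A) Q
  setLIntegral_eq : ∀ ⦃A : Set X⦄ ⦃B : Set Y⦄, MeasurableSet A → MeasurableSet B →
    ∫⁻ y in B, S y A ∂Q = R (A ×ˢ B)

namespace IsDisintegration_s8

variable {R : Measure (X × Y)}

theorem measure_univ_eq (hd : IsDisintegration_s8 Q R 𝔄y S) : Q univ = R univ := by
  have := hd.isProbabilityMeasure
  simpa using hd.setLIntegral_eq .univ .univ

theorem sectionsIntegrateTo_prod (hd : IsDisintegration_s8 Q R 𝔄y S) {A : Set X} {B : Set Y}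
    (hA : MeasurableSet A) (hB : MeasurableSet B) :
    SectionsIntegrateTo (𝔄y := 𝔄y) Q S (A ×ˢ B) (R (A ×ˢ B)) := by
  have hsec (y : Y) : S y {x | (x, y) ∈ A ×ˢ B} = B.indicator (fun y => S y A) y := by
    by_cases hy : y ∈ B <;> simp [hy]
  refine ⟨?_, ?_, ?_⟩
  · filter_upwards [hd.ae_measurableSet hA] with y hy
    by_cases hyB : y ∈ B <;> simp [hyB, hy.nullMeasurableSet]
  · simp_rw [hsec]
    exact (hd.aemeasurable_measure hA).indicator hB
  · simp_rw [hsec]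
    rw [lintegral_indicator hB, hd.setLIntegral_eq hA hB]

theorem disintegrates [IsFiniteMeasure R] (hd : IsDisintegration_s8 Q R 𝔄y S) :
    Disintegrates (𝔄y := 𝔄y) R Q S := by
  intro W hW
  induction W, hW using MeasurableSpace.induction_on_inter generateFrom_prod.symm
    isPiSystem_prod with
  | empty => simp [SectionsIntegrateTo]
  | basic t ht =>
    obtain ⟨A, hA, B, hB, rfl⟩ := ht
    exact hd.sectionsIntegrateTo_prod hA hB
  | compl t htm ih =>
    rw [measure_compl htm (measure_ne_top R t), ← hd.measure_univ_eq]
    exact ih.compl hd.isProbabilityMeasure (measure_ne_top R t)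
  | iUnion V hV hVm ih =>
    rw [measure_iUnion hV hVm]
    exact .iUnion ih hV

end IsDisintegration_s8

end MeasureTheory

theorem stmt8_general {X Y : Type*} [mX : MeasurableSpace X] [mY : MeasurableSpace Y]
    (Q : Measure Y)
    (R : Measure (X × Y)) [IsProbabilityMeasure R]
    (𝔄y : Y → MeasurableSpace X)
    (S : ∀ y, @Measure X (𝔄y y)) (hS : ∀ y, @IsProbabilityMeasure X (𝔄y y) (S y))
    (hDis1 : ∀ A : Set X, MeasurableSet A → ∃ N, MeasurableSet N ∧ Q N = 0 ∧
      (∀ y ∉ N, MeasurableSet[𝔄y y] A) ∧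
      ∃ g : Y → ENNReal, Measurable g ∧ ∀ y ∉ N, S y A = g y)
    (hDis2 : ∀ (A : Set X) (B : Set Y), MeasurableSet A → MeasurableSet B →
      ∫⁻ y in B, S y A ∂Q = R (A ×ˢ B))
    (memM : Set (X × Y) → Prop)
    (hmemM : ∀ E, memM E ↔
      ∃ N, MeasurableSet N ∧ Q N = 0 ∧ ∀ y ∉ N, S y {x | (x, y) ∈ E} = 0)
    -- the σ-algebra 𝔄⊙𝔅
    (mAoB : MeasurableSpace (X × Y))
    -- the measure R̂_⊙ on 𝔄⊙𝔅
    (Rd : @Measure (X × Y) mAoB)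
    (hRd : ∀ W N, MeasurableSet W → memM N → Rd (symmDiff W N) = R W)
    -- f bounded and 𝔄⊙𝔅-measurable
    (f : X × Y → ℝ) (hf : @Measurable _ _ mAoB _ f) (C : ℝ) (hbd : ∀ p, |f p| ≤ C) :
    -- (a) for Q-a.e. y the section f^y is measurable w.r.t. the Ŝ_y-completion of 𝔄_y
    (∀ᵐ y ∂Q, @NullMeasurable X ℝ (𝔄y y) _ (fun x => f (x, y)) (S y)) ∧
    -- (b) if f = 0 R̂_⊙-a.e. then for Q-a.e. y, f^y = 0 Ŝ_y-a.e.
    (Rd {p | f p ≠ 0} = 0 → ∀ᵐ y ∂Q, S y {x | f (x, y) ≠ 0} = 0) ∧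
    -- (c) the iterated integral formula
    ∫ p, f p ∂(Rd) = ∫ y, (∫ x, f (x, y) ∂(S y)) ∂Q := by
  have hd : IsDisintegration_s8 Q R 𝔄y S :=
    { isProbabilityMeasure := hS
      ae_measurableSet := fun A hA => by
        obtain ⟨N, -, hQN, hAN, -⟩ := hDis1 A hA
        filter_upwards [measure_eq_zero_iff_ae_notMem.1 hQN] using hAN
      aemeasurable_measure := fun A hA => by
        obtain ⟨N, -, hQN, -, g, hg, hSg⟩ := hDis1 A hA
        exact ⟨g, hg, by filter_upwards [measure_eq_zero_iff_ae_notMem.1 hQN] using hSg⟩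
      setLIntegral_eq := hDis2 }
  have hmem_empty : memM ∅ := (hmemM ∅).2 ⟨∅, .empty, measure_empty, fun _ _ => by simp⟩
  have hRd_eq (V : Set (X × Y)) (hV : MeasurableSet[mAoB] V) : Rd V = R V := by
    simpa only [symmDiff_bot] using hRd V ⊥ hV hmem_empty
  have hRd_dis : Disintegrates (𝔄y := 𝔄y) Rd Q S := hd.disintegrates.of_measure_eq hRd_eq
  have : IsFiniteMeasure Rd := ⟨hRd_eq univ .univ ▸ measure_lt_top R univ⟩
  refine ⟨hRd_dis.ae_nullMeasurable_section hf, fun hf0 => ?_,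
    hRd_dis.integral_eq_integral_integral hf
      (.of_bound hf.aestronglyMeasurable C (ae_of_all _ hbd))⟩
  obtain ⟨-, hmeas, hint⟩ := hRd_dis (hf (measurableSet_singleton 0).compl)
  exact (lintegral_eq_zero_iff' hmeas).1 (hint.trans hf0)

theorem stmt8 {X Y : Type*} [mX : MeasurableSpace X] [mY : MeasurableSpace Y]
    (P : Measure X) (Q : Measure Y) [IsProbabilityMeasure P] [IsProbabilityMeasure Q]
    (R : Measure (X × Y)) [IsProbabilityMeasure R]
    (hRP : ∀ A, MeasurableSet A → R (A ×ˢ (univ : Set Y)) = P A)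
    (hRQ : ∀ B, MeasurableSet B → R ((univ : Set X) ×ˢ B) = Q B)
    (𝔄y : Y → MeasurableSpace X) (hsub : ∀ y, 𝔄y y ≤ mX)
    (S : ∀ y, @Measure X (𝔄y y)) (hS : ∀ y, @IsProbabilityMeasure X (𝔄y y) (S y))
    (hDis1 : ∀ A : Set X, MeasurableSet A → ∃ N, MeasurableSet N ∧ Q N = 0 ∧
      (∀ y ∉ N, MeasurableSet[𝔄y y] A) ∧
      ∃ g : Y → ENNReal, Measurable g ∧ ∀ y ∉ N, S y A = g y)
    (hDis2 : ∀ (A : Set X) (B : Set Y), MeasurableSet A → MeasurableSet B →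
      ∫⁻ y in B, S y A ∂Q = R (A ×ˢ B))
    (memM : Set (X × Y) → Prop)
    (hmemM : ∀ E, memM E ↔
      ∃ N, MeasurableSet N ∧ Q N = 0 ∧ ∀ y ∉ N, S y {x | (x, y) ∈ E} = 0)
    -- the σ-algebra 𝔄⊙𝔅
    (mAoB : MeasurableSpace (X × Y))
    (hmAoB : ∀ V : Set (X × Y), MeasurableSet[mAoB] V ↔
      ∃ W N, MeasurableSet W ∧ memM N ∧ V = symmDiff W N)
    -- the measure R̂_⊙ on 𝔄⊙𝔅
    (Rd : @Measure (X × Y) mAoB)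
    (hRd : ∀ W N, MeasurableSet W → memM N → Rd (symmDiff W N) = R W)
    -- f bounded and 𝔄⊙𝔅-measurable
    (f : X × Y → ℝ) (hf : @Measurable _ _ mAoB _ f) (C : ℝ) (hbd : ∀ p, |f p| ≤ C) :
    -- (a) for Q-a.e. y the section f^y is measurable w.r.t. the Ŝ_y-completion of 𝔄_y
    (∀ᵐ y ∂Q, @NullMeasurable X ℝ (𝔄y y) _ (fun x => f (x, y)) (S y)) ∧
    -- (b) if f = 0 R̂_⊙-a.e. then for Q-a.e. y, f^y = 0 Ŝ_y-a.e.
    (Rd {p | f p ≠ 0} = 0 → ∀ᵐ y ∂Q, S y {x | f (x, y) ≠ 0} = 0) ∧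
    -- (c) the iterated integral formula
    ∫ p, f p ∂(Rd) = ∫ y, (∫ x, f (x, y) ∂(S y)) ∂Q :=
  stmt8_general (mX := mX) (mY := mY) Q R 𝔄y S hS hDis1 hDis2 memM hmemM mAoB Rd hRd f hf C hbd
end

section
/- Let (X, 𝔄, P) and (Y, 𝔅, Q) be probability spaces with (Y, 𝔅, Q) complete, and suppose R ∈ P·Q has a Q-disintegration {(𝔄_y, S_y) : y ∈ Y}. For A ∈ 𝔄 and B ∈ 𝔅, the disintegration identity ∫_B S_y(A) dQ(y) = R(A × B) extends to the product σ-algebra: for every W ∈ 𝔄 ⊗ 𝔅 there is a Q-null set N such that W^y ∈ 𝔄_y for all y ∉ N, the function y ↦ S_y(W^y) is Q-measurable off N, and R(W) = ∫_Y S_y(W^y) dQ(y). -/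
/-!
The sets `W` for which the slices `W^y` are almost surely `𝔄_y`-measurable, `y ↦ S_y(W^y)` is
a.e.-measurable and `R(W) = ∫ S_y(W^y) dQ` form a Dynkin system: complements work because every
`S_y` is a probability measure and `R(X × Y) = Q(Y)` by (Dis2), and disjoint unions by countable
additivity of the `S_y` and monotone convergence. Rectangles `A × B` belong to it by (Dis1) and
(Dis2), and they form a π-system generating `𝔄 ⊗ 𝔅`.
-/

open MeasureTheory Set Function

theorem ae_iff_exists_measurable_null {α : Type*} [MeasurableSpace α] {μ : Measure α}
    {p : α → Prop} : (∀ᵐ a ∂μ, p a) ↔ ∃ N, MeasurableSet N ∧ μ N = 0 ∧ ∀ a ∉ N, p a := by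
  constructor
  · intro h
    obtain ⟨s, hs, hsm, hp⟩ := h.exists_measurable_mem
    exact ⟨sᶜ, hsm.compl, hs, fun a ha => hp a (not_not.1 ha)⟩
  · rintro ⟨N, -, hN, hp⟩
    exact (measure_eq_zero_iff_ae_notMem.1 hN).mono hp

section SliceDisintegration

variable {X Y : Type*} [MeasurableSpace X] [MeasurableSpace Y]

def HasSliceDisintegration (Q : Measure Y) (𝔄y : Y → MeasurableSpace X)
    (S : ∀ y, @Measure X (𝔄y y)) (R : Measure (X × Y)) (W : Set (X × Y)) : Prop :=
  (∀ᵐ y ∂Q, MeasurableSet[𝔄y y] {x | (x, y) ∈ W}) ∧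
    AEMeasurable (fun y => S y {x | (x, y) ∈ W}) Q ∧
    R W = ∫⁻ y, S y {x | (x, y) ∈ W} ∂Q

variable {Q : Measure Y} {𝔄y : Y → MeasurableSpace X}
  {S : ∀ y, @Measure X (𝔄y y)} {R : Measure (X × Y)}

theorem hasSliceDisintegration_empty : HasSliceDisintegration Q 𝔄y S R ∅ := by
  simp [HasSliceDisintegration, aemeasurable_const]

theorem hasSliceDisintegration_prod {A : Set X} {B : Set Y} (hB : MeasurableSet B)
    (hA : ∀ᵐ y ∂Q, MeasurableSet[𝔄y y] A) (hSA : AEMeasurable (fun y => S y A) Q)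
    (hAB : ∫⁻ y in B, S y A ∂Q = R (A ×ˢ B)) :
    HasSliceDisintegration Q 𝔄y S R (A ×ˢ B) := by
  classical
  have hslice : ∀ y, {x | (x, y) ∈ A ×ˢ B} = if y ∈ B then A else ∅ := fun y =>
    mk_preimage_prod_left_eq_if
  have hS_slice : (fun y => S y {x | (x, y) ∈ A ×ˢ B}) = B.indicator fun y => S y A := by
    ext y
    by_cases hy : y ∈ B <;> simp [hy]
  refine ⟨hA.mono fun y hy => ?_, ?_, ?_⟩
  · rw [hslice]
    split_ifs
    exacts [hy, @MeasurableSet.empty X (𝔄y y)]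
  · rw [hS_slice]
    exact hSA.indicator hB
  · rw [hS_slice, lintegral_indicator hB, hAB]

theorem HasSliceDisintegration.compl [IsFiniteMeasure Q]
    (hS : ∀ y, @IsProbabilityMeasure X (𝔄y y) (S y)) (hR : R univ = Q univ)
    {W : Set (X × Y)} (hW : MeasurableSet W) (h : HasSliceDisintegration Q 𝔄y S R W) :
    HasSliceDisintegration Q 𝔄y S R Wᶜ := by
  obtain ⟨hmeas, hSW, hRW⟩ := h
  have hcompl : (fun y => S y {x | (x, y) ∈ Wᶜ}) =ᵐ[Q] fun y => 1 - S y {x | (x, y) ∈ W} := by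
    filter_upwards [hmeas] with y hy
    rw [show {x | (x, y) ∈ Wᶜ} = {x | (x, y) ∈ W}ᶜ from rfl,
      measure_compl hy (measure_ne_top _ _), measure_univ]
  have hle : (fun y => S y {x | (x, y) ∈ W}) ≤ᵐ[Q] fun _ => 1 :=
    Filter.Eventually.of_forall fun y => prob_le_one
  have : IsFiniteMeasure R := ⟨hR ▸ measure_lt_top Q univ⟩
  have hfin : ∫⁻ y, S y {x | (x, y) ∈ W} ∂Q ≠ ⊤ := hRW ▸ measure_ne_top R W
  refine ⟨hmeas.mono fun y hy => hy.compl, (aemeasurable_const.sub hSW).congr hcompl.symm, ?_⟩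
  rw [lintegral_congr_ae hcompl, lintegral_sub' hSW hfin hle, lintegral_one, ← hRW, ← hR,
    measure_compl hW (measure_ne_top R W)]

theorem hasSliceDisintegration_iUnion {f : ℕ → Set (X × Y)} (hdisj : Pairwise (Disjoint on f))
    (hf : ∀ i, MeasurableSet (f i)) (h : ∀ i, HasSliceDisintegration Q 𝔄y S R (f i)) :
    HasSliceDisintegration Q 𝔄y S R (⋃ i, f i) := by
  have hslice : ∀ y, {x | (x, y) ∈ ⋃ i, f i} = ⋃ i, {x | (x, y) ∈ f i} := fun y =>
    preimage_iUnion
  have hmeas : ∀ᵐ y ∂Q, ∀ i, MeasurableSet[𝔄y y] {x | (x, y) ∈ f i} :=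
    ae_all_iff.2 fun i => (h i).1
  have hsum : (fun y => S y {x | (x, y) ∈ ⋃ i, f i}) =ᵐ[Q]
      fun y => ∑' i, S y {x | (x, y) ∈ f i} := by
    filter_upwards [hmeas] with y hy
    rw [hslice, measure_iUnion (f := fun i => {x | (x, y) ∈ f i})
      (fun i j hij => (hdisj hij).preimage _) hy]
  refine ⟨hmeas.mono fun y hy => hslice y ▸ .iUnion hy,
    (AEMeasurable.tsum fun i => (h i).2.1).congr hsum.symm, ?_⟩
  rw [lintegral_congr_ae hsum, lintegral_tsum fun i => (h i).2.1, measure_iUnion hdisj hf]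
  exact tsum_congr fun i => (h i).2.2

theorem hasSliceDisintegration_of_measurableSet [IsFiniteMeasure Q]
    (hS : ∀ y, @IsProbabilityMeasure X (𝔄y y) (S y))
    (hDis1 : ∀ A : Set X, MeasurableSet A →
      (∀ᵐ y ∂Q, MeasurableSet[𝔄y y] A) ∧ AEMeasurable (fun y => S y A) Q)
    (hDis2 : ∀ (A : Set X) (B : Set Y), MeasurableSet A → MeasurableSet B →
      ∫⁻ y in B, S y A ∂Q = R (A ×ˢ B))
    {W : Set (X × Y)} (hW : MeasurableSet W) : HasSliceDisintegration Q 𝔄y S R W := by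
  have hR : R univ = Q univ := by simpa using (hDis2 univ univ .univ .univ).symm
  induction W, hW using MeasurableSpace.induction_on_inter generateFrom_prod.symm isPiSystem_prod
  with
  | empty => exact hasSliceDisintegration_empty
  | basic t ht =>
    obtain ⟨A, hA, B, hB, rfl⟩ := ht
    exact hasSliceDisintegration_prod hB (hDis1 A hA).1 (hDis1 A hA).2 (hDis2 A B hA hB)
  | compl t ht ih => exact ih.compl hS hR ht
  | iUnion f hdisj hf ih => exact hasSliceDisintegration_iUnion hdisj hf ih

end SliceDisintegration

theorem stmt10_general {X Y : Type*} [mX : MeasurableSpace X] [mY : MeasurableSpace Y]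
    (Q : Measure Y) [IsProbabilityMeasure Q]
    (R : Measure (X × Y))
    (𝔄y : Y → MeasurableSpace X)
    (S : ∀ y, @Measure X (𝔄y y)) (hS : ∀ y, @IsProbabilityMeasure X (𝔄y y) (S y))
    (hDis1 : ∀ A : Set X, MeasurableSet A → ∃ N, MeasurableSet N ∧ Q N = 0 ∧
      (∀ y ∉ N, MeasurableSet[𝔄y y] A) ∧
      ∃ g : Y → ENNReal, Measurable g ∧ ∀ y ∉ N, S y A = g y)
    (hDis2 : ∀ (A : Set X) (B : Set Y), MeasurableSet A → MeasurableSet B →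
      ∫⁻ y in B, S y A ∂Q = R (A ×ˢ B)) :
    ∀ W : Set (X × Y), MeasurableSet W →
      ∃ N : Set Y, MeasurableSet N ∧ Q N = 0 ∧
        (∀ y ∉ N, MeasurableSet[𝔄y y] {x | (x, y) ∈ W}) ∧
        (∃ g : Y → ENNReal, Measurable g ∧ ∀ y ∉ N, S y {x | (x, y) ∈ W} = g y) ∧
        R W = ∫⁻ y, S y {x | (x, y) ∈ W} ∂Q := by
  have hDis1_ae : ∀ A : Set X, MeasurableSet A →
      (∀ᵐ y ∂Q, MeasurableSet[𝔄y y] A) ∧ AEMeasurable (fun y => S y A) Q := by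
    intro A hA
    obtain ⟨N, hNm, hN, hmeas, g, hg, hSg⟩ := hDis1 A hA
    exact ⟨ae_iff_exists_measurable_null.2 ⟨N, hNm, hN, hmeas⟩, g, hg,
      ae_iff_exists_measurable_null.2 ⟨N, hNm, hN, hSg⟩⟩
  intro W hW
  obtain ⟨hmeas, hSW, hRW⟩ := hasSliceDisintegration_of_measurableSet hS hDis1_ae hDis2 hW
  obtain ⟨N, hNm, hN, hgood⟩ :=
    ae_iff_exists_measurable_null.1 (hmeas.and hSW.ae_eq_mk)
  exact ⟨N, hNm, hN, fun y hy => (hgood y hy).1, ⟨hSW.mk, hSW.measurable_mk,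
    fun y hy => (hgood y hy).2⟩, hRW⟩

theorem stmt10 {X Y : Type*} [mX : MeasurableSpace X] [mY : MeasurableSpace Y]
    (P : Measure X) (Q : Measure Y) [IsProbabilityMeasure P] [IsProbabilityMeasure Q]
    -- (Y, 𝔅, Q) is complete
    (hQcomplete : ∀ N : Set Y, Q N = 0 → MeasurableSet N)
    (R : Measure (X × Y)) [IsProbabilityMeasure R]
    (hRP : ∀ A, MeasurableSet A → R (A ×ˢ (univ : Set Y)) = P A)
    (hRQ : ∀ B, MeasurableSet B → R ((univ : Set X) ×ˢ B) = Q B)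
    (𝔄y : Y → MeasurableSpace X) (hsub : ∀ y, 𝔄y y ≤ mX)
    (S : ∀ y, @Measure X (𝔄y y)) (hS : ∀ y, @IsProbabilityMeasure X (𝔄y y) (S y))
    (hDis1 : ∀ A : Set X, MeasurableSet A → ∃ N, MeasurableSet N ∧ Q N = 0 ∧
      (∀ y ∉ N, MeasurableSet[𝔄y y] A) ∧
      ∃ g : Y → ENNReal, Measurable g ∧ ∀ y ∉ N, S y A = g y)
    (hDis2 : ∀ (A : Set X) (B : Set Y), MeasurableSet A → MeasurableSet B →
      ∫⁻ y in B, S y A ∂Q = R (A ×ˢ B)) :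
    ∀ W : Set (X × Y), MeasurableSet W →
      ∃ N : Set Y, MeasurableSet N ∧ Q N = 0 ∧
        (∀ y ∉ N, MeasurableSet[𝔄y y] {x | (x, y) ∈ W}) ∧
        (∃ g : Y → ENNReal, Measurable g ∧ ∀ y ∉ N, S y {x | (x, y) ∈ W} = g y) ∧
        R W = ∫⁻ y, S y {x | (x, y) ∈ W} ∂Q :=
  stmt10_general (mX := mX) (mY := mY) Q R 𝔄y S hS hDis1 hDis2
end

section
/- Let (Z, 𝔷, T) be a probability space, (𝔷_n)_{n∈ℕ} an increasing sequence of sub-σ-algebras of 𝔷 with 𝔷 = σ(⋃_n 𝔷_n), and for each n a lower density τ_n on 𝔷_n (with values in 𝔷) such that τ_{n+1} restricted to 𝔷_n equals τ_n. Then the formula τ(B) := ⋂_{k∈ℕ} ⋃_{n∈ℕ} ⋂_{m≥n} τ_m({E_{𝔷_m}(χ_B) > 1 − 2^{−k}}), for B ∈ 𝔷, where E_{𝔷_m}(χ_B) denotes (a version of) the conditional expectation of the indicator of B with respect to 𝔷_m, defines a lower density τ on 𝔷 with τ restricted to 𝔷_n equal to τ_n for each n. -/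
/-!
Fix `B` and write `fₘ = E_{𝔷_m}(χ_B)`. Since `τ_m({fₘ > 1 - 2^{-k}})` agrees with
`{fₘ > 1 - 2^{-k}}` up to a null set, off one null set a point `z` lies in `τ(B)` iff
`fₘ(z) > 1 - 2^{-k}` eventually for every `k`. By Lévy's upward theorem `fₘ → χ_B` almost
everywhere, so this happens for almost every `z ∈ B` and for almost no `z ∉ B`; hence `τ(B) = B`
up to a null set. Intersections are preserved because `E(χ_A) + E(χ_B) ≤ E(χ_{A ∩ B}) + 1`, so
two levels `1 - 2^{-(k+1)}` give the level `1 - 2^{-k}` for `A ∩ B`. If `A ∈ 𝔷_n`, then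
`fₘ = χ_A` for `m ≥ n`, and the formula reduces to `τ_n(A)` by compatibility.
-/

open MeasureTheory Set Filter Topology

section

variable {Z : Type*}

structure IsLowerDensity [mZ : MeasurableSpace Z] (T : Measure Z) (𝔇 : MeasurableSpace Z)
    (δ : Set Z → Set Z) : Prop where
  measurableSet : ∀ A, MeasurableSet[𝔇] A → MeasurableSet[mZ] (δ A)
  empty : δ ∅ = ∅
  univ : δ univ = univ
  inter : ∀ A B, MeasurableSet[𝔇] A → MeasurableSet[𝔇] B → δ (A ∩ B) = δ A ∩ δ B
  measure_symmDiff_eq_zero : ∀ A, MeasurableSet[𝔇] A → T (symmDiff (δ A) A) = 0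
  congr : ∀ A B, MeasurableSet[𝔇] A → MeasurableSet[𝔇] B → T (symmDiff A B) = 0 → δ A = δ B

namespace IsLowerDensity

variable {𝔇 : MeasurableSpace Z} [MeasurableSpace Z] {T : Measure Z} {δ : Set Z → Set Z}
  {A B : Set Z}

lemma ae_eq (hδ : IsLowerDensity T 𝔇 δ) (hA : MeasurableSet[𝔇] A) : δ A =ᵐ[T] A :=
  measure_symmDiff_eq_zero_iff.1 (hδ.measure_symmDiff_eq_zero A hA)

lemma subset_of_ae_le (hδ : IsLowerDensity T 𝔇 δ) (hA : MeasurableSet[𝔇] A)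
    (hB : MeasurableSet[𝔇] B) (h : A ≤ᵐ[T] B) : δ A ⊆ δ B := by
  have hAB : A =ᵐ[T] (A ∩ B : Set Z) :=
    eventuallyEq_set.2 (h.mono fun _ hz => ⟨fun ha => ⟨ha, hz ha⟩, And.left⟩)
  rw [hδ.congr A (A ∩ B) hA (hA.inter hB) (measure_symmDiff_eq_zero_iff.2 hAB),
    hδ.inter A B hA hB]
  exact inter_subset_right

end IsLowerDensity

lemma eq_of_le_of_succ_eq {m : ℕ → MeasurableSpace Z} (hmono : Monotone m) {τ : ℕ → Set Z → Set Z}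
    (hcompat : ∀ n A, MeasurableSet[m n] A → τ (n + 1) A = τ n A) {n j : ℕ} (hnj : n ≤ j)
    {A : Set Z} (hA : MeasurableSet[m n] A) : τ j A = τ n A := by
  induction j, hnj using Nat.le_induction with
  | base => rfl
  | succ j hnj ih => rw [hcompat j A (hmono hnj _ hA), ih]

section condExpSuperlevel

variable {m : MeasurableSpace Z} [mZ : MeasurableSpace Z] {T : Measure Z}

def condExpSuperlevel (T : Measure Z) (m : MeasurableSpace Z) (B : Set Z) (k : ℕ) : Set Z :=
  {z | 1 - (2 : ℝ)⁻¹ ^ k < (T[B.indicator (fun _ => (1 : ℝ)) | m]) z}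

variable {A B : Set Z}

lemma measurableSet_condExpSuperlevel (B : Set Z) (k : ℕ) :
    MeasurableSet[m] (condExpSuperlevel T m B k) :=
  stronglyMeasurable_const.measurableSet_lt stronglyMeasurable_condExp

lemma condExpSuperlevel_empty : condExpSuperlevel T m ∅ 0 = ∅ := by
  simp [condExpSuperlevel]

variable [IsFiniteMeasure T]

lemma condExpSuperlevel_ae_le (hA : MeasurableSet A) (hB : MeasurableSet B) (h : A ≤ᵐ[T] B)
    (k : ℕ) : condExpSuperlevel T m A k ≤ᵐ[T] condExpSuperlevel T m B k := by
  have hind : A.indicator (fun _ => (1 : ℝ)) ≤ᵐ[T] B.indicator (fun _ => (1 : ℝ)) :=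
    h.mono fun z hz => by
      by_cases hzA : z ∈ A
      · rw [indicator_of_mem hzA, indicator_of_mem (hz hzA)]
      · rw [indicator_of_notMem hzA]
        exact indicator_nonneg (fun _ _ => zero_le_one) z
  filter_upwards [condExp_mono (m := m) ((integrable_const 1).indicator hA)
    ((integrable_const 1).indicator hB) hind] with z hz hzA
  exact hzA.trans_le hz

variable (hm : m ≤ mZ)
include hm

lemma condExpSuperlevel_of_measurableSet (hB : MeasurableSet[m] B) (k : ℕ) :
    condExpSuperlevel T m B k = B := by
  rw [condExpSuperlevel, condExp_of_stronglyMeasurable hm (stronglyMeasurable_const.indicator hB)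
    ((integrable_const 1).indicator (hm _ hB))]
  ext z
  by_cases hz : z ∈ B
  · simp [hz, pow_pos]
  · simpa [hz] using inv_le_one_of_one_le₀ (one_le_pow₀ (one_le_two : (1 : ℝ) ≤ 2) (n := k))

lemma condExp_indicator_add_le (hA : MeasurableSet A) (hB : MeasurableSet B) :
    ∀ᵐ z ∂T, (T[A.indicator (fun _ => (1 : ℝ)) | m]) z + (T[B.indicator (fun _ => (1 : ℝ)) | m]) z
      ≤ (T[(A ∩ B).indicator (fun _ => (1 : ℝ)) | m]) z + 1 := by
  have hIA := (integrable_const (1 : ℝ) (μ := T)).indicator hA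
  have hIB := (integrable_const (1 : ℝ) (μ := T)).indicator hB
  have hIAB := (integrable_const (1 : ℝ) (μ := T)).indicator (hA.inter hB)
  have hpointwise : A.indicator (fun _ => (1 : ℝ)) + B.indicator (fun _ => 1)
      ≤ (A ∩ B).indicator (fun _ => 1) + fun _ => 1 := fun z => by
    by_cases hzA : z ∈ A <;> by_cases hzB : z ∈ B <;> simp [hzA, hzB]
  filter_upwards [condExp_add hIA hIB m, condExp_add hIAB (integrable_const 1) m,
    condExp_mono (m := m) (hIA.add hIB) (hIAB.add (integrable_const 1))
      (Eventually.of_forall hpointwise)] with z hAB hABone hle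
  simpa [hAB, hABone, condExp_const hm] using hle

lemma condExpSuperlevel_inter_ae_le (hA : MeasurableSet A) (hB : MeasurableSet B) (k : ℕ) :
    (condExpSuperlevel T m A (k + 1) ∩ condExpSuperlevel T m B (k + 1) : Set Z)
      ≤ᵐ[T] condExpSuperlevel T m (A ∩ B) k := by
  filter_upwards [condExp_indicator_add_le hm hA hB] with z hz ⟨hzA, hzB⟩
  have hhalf : (2 : ℝ)⁻¹ ^ (k + 1) + (2 : ℝ)⁻¹ ^ (k + 1) = (2 : ℝ)⁻¹ ^ k := by ring
  simp only [condExpSuperlevel, mem_ofPred_eq] at hzA hzB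
  show 1 - (2 : ℝ)⁻¹ ^ k < _
  linarith

end condExpSuperlevel

lemma forall_eventually_one_sub_lt_iff {f : ℕ → ℝ} {A : Set Z} {z : Z}
    (hf : Tendsto f atTop (𝓝 (A.indicator (fun _ => (1 : ℝ)) z))) :
    (∀ k : ℕ, ∀ᶠ j in atTop, 1 - (2 : ℝ)⁻¹ ^ k < f j) ↔ z ∈ A := by
  by_cases hz : z ∈ A
  · rw [indicator_of_mem hz] at hf
    simp only [hz, iff_true]
    exact fun k => hf.eventually (eventually_gt_nhds (sub_lt_self 1 (by positivity)))
  · rw [indicator_of_notMem hz] at hf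
    simp only [hz, iff_false]
    intro h
    obtain ⟨j, hj, hj'⟩ := ((h 1).and (hf.eventually (eventually_lt_nhds (by norm_num :
      (0 : ℝ) < 1 - 2⁻¹ ^ 1)))).exists
    exact hj'.not_gt hj

section martingaleDensity

variable [mZ : MeasurableSpace Z] {T : Measure Z} {m : ℕ → MeasurableSpace Z}
  {τ : ℕ → Set Z → Set Z} {A B : Set Z}

def martingaleDensity (T : Measure Z) (m : ℕ → MeasurableSpace Z) (τ : ℕ → Set Z → Set Z)
    (B : Set Z) : Set Z :=
  ⋂ k : ℕ, ⋃ n : ℕ, ⋂ j : ℕ, ⋂ (_ : n ≤ j), τ j (condExpSuperlevel T (m j) B k)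

lemma mem_martingaleDensity_iff {z : Z} : z ∈ martingaleDensity T m τ B ↔
    ∀ k, ∀ᶠ j in atTop, z ∈ τ j (condExpSuperlevel T (m j) B k) := by
  simp [martingaleDensity, eventually_atTop]

lemma martingaleDensity_eq_of_measurableSet [IsFiniteMeasure T] (hmono : Monotone m)
    (hle : ∀ n, m n ≤ mZ) (hcompat : ∀ n A, MeasurableSet[m n] A → τ (n + 1) A = τ n A) {n : ℕ}
    (hA : MeasurableSet[m n] A) : martingaleDensity T m τ A = τ n A := by
  have hconst : ∀ k, ∀ᶠ j in atTop, τ j (condExpSuperlevel T (m j) A k) = τ n A :=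
    fun k => eventually_atTop.2 ⟨n, fun j hnj => by
      rw [condExpSuperlevel_of_measurableSet (hle j) (hmono hnj _ hA),
        eq_of_le_of_succ_eq hmono hcompat hnj hA]⟩
  ext z
  rw [mem_martingaleDensity_iff]
  refine ⟨fun h => ?_, fun hz k => (hconst k).mono fun j hj => hj ▸ hz⟩
  obtain ⟨j, hj, hzj⟩ := ((hconst 0).and (h 0)).exists
  exact hj ▸ hzj

variable (hτ : ∀ n, IsLowerDensity T (m n) (τ n))
include hτ

lemma measurableSet_martingaleDensity (B : Set Z) : MeasurableSet (martingaleDensity T m τ B) :=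
  .iInter fun k => .iUnion fun _ => .iInter fun j => .iInter fun _ =>
    (hτ j).measurableSet _ (measurableSet_condExpSuperlevel B k)

lemma martingaleDensity_empty : martingaleDensity T m τ ∅ = ∅ := by
  refine eq_empty_of_forall_notMem fun z hz => ?_
  obtain ⟨j, hj⟩ := (mem_martingaleDensity_iff.1 hz 0).exists
  rwa [condExpSuperlevel_empty, (hτ j).empty] at hj

variable [IsFiniteMeasure T]

lemma martingaleDensity_mono (hA : MeasurableSet A) (hB : MeasurableSet B) (h : A ≤ᵐ[T] B) :
    martingaleDensity T m τ A ⊆ martingaleDensity T m τ B :=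
  fun _ hz => mem_martingaleDensity_iff.2 fun k =>
    (mem_martingaleDensity_iff.1 hz k).mono fun j hj => (hτ j).subset_of_ae_le
      (measurableSet_condExpSuperlevel A k) (measurableSet_condExpSuperlevel B k)
      (condExpSuperlevel_ae_le hA hB h k) hj

lemma martingaleDensity_congr (hA : MeasurableSet A) (hB : MeasurableSet B)
    (h : T (symmDiff A B) = 0) : martingaleDensity T m τ A = martingaleDensity T m τ B := by
  have hAB : A =ᵐ[T] B := measure_symmDiff_eq_zero_iff.1 h
  exact Subset.antisymm (martingaleDensity_mono hτ hA hB hAB.le)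
    (martingaleDensity_mono hτ hB hA hAB.symm.le)

variable (hle : ∀ n, m n ≤ mZ)
include hle

lemma martingaleDensity_univ : martingaleDensity T m τ univ = univ := by
  ext z
  simp [mem_martingaleDensity_iff, condExpSuperlevel_of_measurableSet (hle _) MeasurableSet.univ,
    (hτ _).univ]

lemma martingaleDensity_inter (hA : MeasurableSet A) (hB : MeasurableSet B) :
    martingaleDensity T m τ (A ∩ B) = martingaleDensity T m τ A ∩ martingaleDensity T m τ B := by
  refine Subset.antisymm (subset_inter
    (martingaleDensity_mono hτ (hA.inter hB) hA inter_subset_left.eventuallyLE)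
    (martingaleDensity_mono hτ (hA.inter hB) hB inter_subset_right.eventuallyLE)) ?_
  rintro z ⟨hzA, hzB⟩
  rw [mem_martingaleDensity_iff] at hzA hzB ⊢
  intro k
  filter_upwards [hzA (k + 1), hzB (k + 1)] with j hzAj hzBj
  have hmA := measurableSet_condExpSuperlevel (m := m j) (T := T) A (k + 1)
  have hmB := measurableSet_condExpSuperlevel (m := m j) (T := T) B (k + 1)
  refine (hτ j).subset_of_ae_le (hmA.inter hmB) (measurableSet_condExpSuperlevel _ k)
    (condExpSuperlevel_inter_ae_le (hle j) hA hB k) ?_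
  rw [(hτ j).inter _ _ hmA hmB]
  exact ⟨hzAj, hzBj⟩

lemma martingaleDensity_ae_eq (hmono : Monotone m) (hgen : (⨆ n, m n) = mZ)
    (hA : MeasurableSet A) : martingaleDensity T m τ A =ᵐ[T] A := by
  let ℱ : Filtration ℕ mZ := ⟨m, hmono, hle⟩
  have hconv : ∀ᵐ z ∂T, Tendsto (fun j => (T[A.indicator (fun _ => (1 : ℝ)) | m j]) z)
      atTop (𝓝 (A.indicator (fun _ => (1 : ℝ)) z)) :=
    ((integrable_const 1).indicator hA).tendsto_ae_condExp (ℱ := ℱ)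
      (by rw [show (⨆ n, ℱ n) = mZ from hgen]; exact stronglyMeasurable_const.indicator hA)
  have hτ_ae : ∀ᵐ z ∂T, ∀ j k,
      z ∈ τ j (condExpSuperlevel T (m j) A k) ↔ z ∈ condExpSuperlevel T (m j) A k :=
    ae_all_iff.2 fun j => ae_all_iff.2 fun k =>
      eventuallyEq_set.1 ((hτ j).ae_eq (measurableSet_condExpSuperlevel A k))
  refine eventuallyEq_set.2 ?_
  filter_upwards [hconv, hτ_ae] with z hz hτz
  simp only [mem_martingaleDensity_iff, hτz]
  exact forall_eventually_one_sub_lt_iff hz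

theorem isLowerDensity_martingaleDensity (hmono : Monotone m) (hgen : (⨆ n, m n) = mZ) :
    IsLowerDensity T mZ (martingaleDensity T m τ) where
  measurableSet A _ := measurableSet_martingaleDensity hτ A
  empty := martingaleDensity_empty hτ
  univ := martingaleDensity_univ hτ hle
  inter _ _ := martingaleDensity_inter hτ hle
  measure_symmDiff_eq_zero _ hA :=
    measure_symmDiff_eq_zero_iff.2 (martingaleDensity_ae_eq hτ hle hmono hgen hA)
  congr _ _ := martingaleDensity_congr hτ

end martingaleDensity

end

theorem stmt11 {Z : Type*} [mZ : MeasurableSpace Z] (T : Measure Z) [IsProbabilityMeasure T]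
    (m : ℕ → MeasurableSpace Z) (hmono : Monotone m) (hle : ∀ n, m n ≤ mZ)
    (hgen : (⨆ n, m n) = mZ)
    (τ : ℕ → Set Z → Set Z)
    (hmeas : ∀ n A, MeasurableSet[m n] A → MeasurableSet (τ n A))
    (hempty : ∀ n, τ n ∅ = ∅) (huniv : ∀ n, τ n univ = univ)
    (hinter : ∀ n A B, MeasurableSet[m n] A → MeasurableSet[m n] B →
      τ n (A ∩ B) = τ n A ∩ τ n B)
    (hae : ∀ n A, MeasurableSet[m n] A → T (symmDiff (τ n A) A) = 0)
    (hcong : ∀ n A B, MeasurableSet[m n] A → MeasurableSet[m n] B →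
      T (symmDiff A B) = 0 → τ n A = τ n B)
    (hcompat : ∀ n A, MeasurableSet[m n] A → τ (n + 1) A = τ n A)
    -- the density defined by the martingale formula
    (τγ : Set Z → Set Z)
    (hτγ : ∀ B : Set Z, τγ B = ⋂ k : ℕ, ⋃ n : ℕ, ⋂ j : ℕ, ⋂ (_ : n ≤ j),
      τ j {z | 1 - (2 : ℝ)⁻¹ ^ k < (T[B.indicator (fun _ => (1 : ℝ)) | m j]) z}) :
    -- τγ is a lower density on 𝔷 whose restriction to each 𝔷_n is τ_n
    (∀ A, MeasurableSet A → MeasurableSet (τγ A)) ∧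
    τγ ∅ = ∅ ∧ τγ univ = univ ∧
    (∀ A B, MeasurableSet A → MeasurableSet B → τγ (A ∩ B) = τγ A ∩ τγ B) ∧
    (∀ A, MeasurableSet A → T (symmDiff (τγ A) A) = 0) ∧
    (∀ A B, MeasurableSet A → MeasurableSet B → T (symmDiff A B) = 0 → τγ A = τγ B) ∧
    (∀ n A, MeasurableSet[m n] A → τγ A = τ n A) := by
  have hτ : ∀ n, IsLowerDensity T (m n) (τ n) := fun n =>
    ⟨hmeas n, hempty n, huniv n, hinter n, hae n, hcong n⟩
  obtain rfl : τγ = martingaleDensity T m τ := funext hτγ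
  obtain ⟨hmeasγ, hemptyγ, hunivγ, hinterγ, haeγ, hcongγ⟩ :=
    isLowerDensity_martingaleDensity hτ hle hmono hgen
  exact ⟨hmeasγ, hemptyγ, hunivγ, hinterγ, haeγ, hcongγ,
    fun n A hA => martingaleDensity_eq_of_measurableSet hmono hle hcompat hA⟩
end

section
/- Let (X, 𝔄, P) and (Y, 𝔅, Q) be probability spaces, and for each y ∈ Y let S_y be a probability on a sub-σ-algebra 𝔄_y ⊆ 𝔄 forming a Q-disintegration of a measure R ∈ P·Q. Let ℳ := {E ⊆ X×Y : ∃ Q-null N ∀y ∉ N, Ŝ_y(E^y) = 0} and 𝔄⊙𝔅 := {W △ N : W ∈ 𝔄⊗𝔅, N ∈ ℳ} with measure R̂_⊙(W △ N) = R(W). Then the completion of 𝔄 ⊗ 𝔅 with respect to R is contained in 𝔄⊙𝔅, and R̂_⊙ extends the completion R̂ of R. -/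
open MeasureTheory Set Function

/-! For every 𝔄 ⊗ 𝔅-measurable `W`, the sections `W^y` are `𝔄_y`-measurable for `Q`-a.e. `y`,
`y ↦ S_y(W^y)` is a.e.-measurable and `∫ S_y(W^y) dQ = R(W)`: this holds for rectangles by
(Dis1) and (Dis2), and passes to differences and disjoint unions, hence to the whole product
σ-algebra by Dynkin's π-λ theorem. Consequently an `R`-null set sits inside a measurable `R`-null
set whose sections are `S_y`-null for a.e. `y`, so it lies in `ℳ`. A completion-measurable `E`
is then `W △ (W △ E)` with `W` a measurable hull of `E` and `W △ E` an `R`-null set, which gives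
`R̂_⊙(E) = R(W) = R̂(E)`. -/

section Disintegration

variable {X Y : Type*} [MeasurableSpace X] [MeasurableSpace Y] {Q : Measure Y}
  {R : Measure (X × Y)} {𝔄y : Y → MeasurableSpace X} {S : ∀ y, @Measure X (𝔄y y)}

structure SectionsDisintegrate (Q : Measure Y) (R : Measure (X × Y))
    (𝔄y : Y → MeasurableSpace X) (S : ∀ y, @Measure X (𝔄y y)) (W : Set (X × Y)) : Prop where
  ae_measurableSet : ∀ᵐ y ∂Q, MeasurableSet[𝔄y y] ((·, y) ⁻¹' W)
  aemeasurable : AEMeasurable (fun y => S y ((·, y) ⁻¹' W)) Q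
  lintegral_eq : ∫⁻ y, S y ((·, y) ⁻¹' W) ∂Q = R W

namespace SectionsDisintegrate

theorem prod {A : Set X} {B : Set Y} (hB : MeasurableSet B)
    (hA : ∀ᵐ y ∂Q, MeasurableSet[𝔄y y] A) (hSA : AEMeasurable (fun y => S y A) Q)
    (hAB : ∫⁻ y in B, S y A ∂Q = R (A ×ˢ B)) :
    SectionsDisintegrate Q R 𝔄y S (A ×ˢ B) := by
  classical
  have hsec : (fun y => S y ((·, y) ⁻¹' A ×ˢ B)) = B.indicator (fun y => S y A) := by
    ext y
    by_cases hy : y ∈ B <;> simp [hy]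
  refine ⟨?_, hsec ▸ hSA.indicator hB, by rw [hsec, lintegral_indicator hB, hAB]⟩
  filter_upwards [hA] with y hy
  rw [mk_preimage_prod_left_eq_if]
  split_ifs
  exacts [hy, @MeasurableSet.empty X (𝔄y y)]

theorem diff [∀ y, IsFiniteMeasure (S y)] {s t : Set (X × Y)} (ht : MeasurableSet t)
    (hts : t ⊆ s) (hRt : R t ≠ ⊤) (hsD : SectionsDisintegrate Q R 𝔄y S s)
    (htD : SectionsDisintegrate Q R 𝔄y S t) : SectionsDisintegrate Q R 𝔄y S (s \ t) := by
  have hsec : ∀ᵐ y ∂Q,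
      S y ((·, y) ⁻¹' (s \ t)) = S y ((·, y) ⁻¹' s) - S y ((·, y) ⁻¹' t) := by
    filter_upwards [htD.ae_measurableSet] with y hy
    exact measure_sdiff (preimage_mono hts) (hy.nullMeasurableSet (μ := S y))
      (measure_ne_top _ _)
  refine ⟨?_, (hsD.aemeasurable.sub htD.aemeasurable).congr (hsec.mono fun y h => h.symm), ?_⟩
  · filter_upwards [hsD.ae_measurableSet, htD.ae_measurableSet] with y hys hyt
    exact hys.diff hyt
  · rw [lintegral_congr_ae hsec, lintegral_sub' htD.aemeasurable (htD.lintegral_eq ▸ hRt)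
      (Filter.Eventually.of_forall fun y => measure_mono (preimage_mono hts)),
      hsD.lintegral_eq, htD.lintegral_eq, measure_sdiff hts ht.nullMeasurableSet hRt]

theorem iUnion {f : ℕ → Set (X × Y)} (hdisj : Pairwise (Disjoint on f))
    (hf : ∀ n, MeasurableSet (f n)) (hD : ∀ n, SectionsDisintegrate Q R 𝔄y S (f n)) :
    SectionsDisintegrate Q R 𝔄y S (⋃ n, f n) := by
  have hmeas : ∀ᵐ y ∂Q, ∀ n, MeasurableSet[𝔄y y] ((·, y) ⁻¹' f n) :=
    ae_all_iff.mpr fun n => (hD n).ae_measurableSet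
  have hsec : ∀ᵐ y ∂Q, S y ((·, y) ⁻¹' ⋃ n, f n) = ∑' n, S y ((·, y) ⁻¹' f n) := by
    filter_upwards [hmeas] with y hy
    rw [preimage_iUnion]
    exact measure_iUnion (fun i j hij => (hdisj hij).preimage _) hy
  refine ⟨?_, (AEMeasurable.tsum fun n => (hD n).aemeasurable).congr
    (hsec.mono fun y h => h.symm), ?_⟩
  · filter_upwards [hmeas] with y hy
    rw [preimage_iUnion]
    exact MeasurableSet.iUnion hy
  · rw [lintegral_congr_ae hsec, lintegral_tsum fun n => (hD n).aemeasurable,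
      measure_iUnion hdisj hf]
    exact tsum_congr fun n => (hD n).lintegral_eq

end SectionsDisintegrate

theorem sectionsDisintegrate_of_measurableSet [∀ y, IsFiniteMeasure (S y)]
    [IsFiniteMeasure R]
    (h𝔄 : ∀ A, MeasurableSet A → ∀ᵐ y ∂Q, MeasurableSet[𝔄y y] A)
    (hSA : ∀ A, MeasurableSet A → AEMeasurable (fun y => S y A) Q)
    (hRect : ∀ A B, MeasurableSet A → MeasurableSet B → ∫⁻ y in B, S y A ∂Q = R (A ×ˢ B))
    {W : Set (X × Y)} (hW : MeasurableSet W) : SectionsDisintegrate Q R 𝔄y S W := by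
  have hprod : ∀ A B, MeasurableSet A → MeasurableSet B →
      SectionsDisintegrate Q R 𝔄y S (A ×ˢ B) :=
    fun A B hA hB => .prod hB (h𝔄 A hA) (hSA A hA) (hRect A B hA hB)
  have huniv : SectionsDisintegrate Q R 𝔄y S univ := by
    simpa using hprod univ univ .univ .univ
  induction W, hW using
    MeasurableSpace.induction_on_inter generateFrom_prod.symm isPiSystem_prod with
  | empty => simpa using hprod ∅ ∅ .empty .empty
  | basic t ht =>
    obtain ⟨A, hA, B, hB, rfl⟩ := ht
    exact hprod A B hA hB
  | compl t ht hD =>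
    rw [compl_eq_univ_sdiff]
    exact huniv.diff ht (subset_univ t) (measure_ne_top R t) hD
  | iUnion f hdisj hf hD => exact .iUnion hdisj hf hD

theorem exists_null_forall_section_null
    (hD : ∀ W, MeasurableSet W → SectionsDisintegrate Q R 𝔄y S W) {T : Set (X × Y)}
    (hT : R T = 0) :
    ∃ N, MeasurableSet N ∧ Q N = 0 ∧ ∀ y ∉ N, S y ((·, y) ⁻¹' T) = 0 := by
  have hZ := hD _ (measurableSet_toMeasurable R T)
  have hnull : ∀ᵐ y ∂Q, S y ((·, y) ⁻¹' T) = 0 := by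
    have hZnull := (lintegral_eq_zero_iff' hZ.aemeasurable).mp
      (hZ.lintegral_eq.trans (by rwa [measure_toMeasurable]))
    -- `S y` acts on arbitrary sets as an outer measure, i.e. as the completion `Ŝ_y`
    filter_upwards [hZnull] with y hy
    exact measure_mono_null (preimage_mono (subset_toMeasurable R T)) hy
  obtain ⟨N, hN, hNm, hN0⟩ := exists_measurable_superset_of_null (ae_iff.mp hnull)
  exact ⟨N, hNm, hN0, fun y hy => not_not.mp fun h => hy (hN h)⟩

end Disintegration

theorem stmt12_general {X Y : Type*} [mX : MeasurableSpace X] [mY : MeasurableSpace Y]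
    (Q : Measure Y)
    (R : Measure (X × Y)) [IsProbabilityMeasure R]
    (𝔄y : Y → MeasurableSpace X)
    (S : ∀ y, @Measure X (𝔄y y)) (hS : ∀ y, @IsProbabilityMeasure X (𝔄y y) (S y))
    (hDis1 : ∀ A : Set X, MeasurableSet A → ∃ N, MeasurableSet N ∧ Q N = 0 ∧
      (∀ y ∉ N, MeasurableSet[𝔄y y] A) ∧
      ∃ g : Y → ENNReal, Measurable g ∧ ∀ y ∉ N, S y A = g y)
    (hDis2 : ∀ (A : Set X) (B : Set Y), MeasurableSet A → MeasurableSet B →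
      ∫⁻ y in B, S y A ∂Q = R (A ×ˢ B))
    (memM : Set (X × Y) → Prop)
    (hmemM : ∀ E, memM E ↔
      ∃ N, MeasurableSet N ∧ Q N = 0 ∧ ∀ y ∉ N, S y {x | (x, y) ∈ E} = 0)
    (Rd : Set (X × Y) → ENNReal)
    (hRd : ∀ W N, MeasurableSet W → memM N → Rd (symmDiff W N) = R W) :
    -- every set measurable for the R-completion of 𝔄 ⊗ 𝔅 belongs to 𝔄⊙𝔅,
    -- and R̂_⊙ agrees there with the completion R̂ of R
    ∀ E : Set (X × Y), NullMeasurableSet E R →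
      (∃ W N, MeasurableSet W ∧ memM N ∧ E = symmDiff W N) ∧ Rd E = R E := by
  have hD : ∀ W, MeasurableSet W → SectionsDisintegrate Q R 𝔄y S W := by
    have (y : Y) : IsFiniteMeasure (S y) := inferInstance
    refine fun W hW =>
      sectionsDisintegrate_of_measurableSet (fun A hA => ?_) (fun A hA => ?_) hDis2 hW
    all_goals obtain ⟨N, -, hN0, hN𝔄, g, hg, hgS⟩ := hDis1 A hA
    · exact (measure_eq_zero_iff_ae_notMem.mp hN0).mono hN𝔄
    · exact ⟨g, hg, (measure_eq_zero_iff_ae_notMem.mp hN0).mono hgS⟩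
  intro E hE
  set W := toMeasurable R E
  have hM : memM (symmDiff W E) := (hmemM _).mpr <| exists_null_forall_section_null hD <|
    measure_symmDiff_eq_zero_iff.mpr hE.toMeasurable_ae_eq
  refine ⟨⟨W, symmDiff W E, measurableSet_toMeasurable R E, hM,
    (symmDiff_symmDiff_cancel_left W E).symm⟩, ?_⟩
  calc Rd E = Rd (symmDiff W (symmDiff W E)) := by rw [symmDiff_symmDiff_cancel_left]
    _ = R W := hRd _ _ (measurableSet_toMeasurable R E) hM
    _ = R E := measure_toMeasurable E

theorem stmt12 {X Y : Type*} [mX : MeasurableSpace X] [mY : MeasurableSpace Y]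
    (P : Measure X) (Q : Measure Y) [IsProbabilityMeasure P] [IsProbabilityMeasure Q]
    (R : Measure (X × Y)) [IsProbabilityMeasure R]
    (hRP : ∀ A, MeasurableSet A → R (A ×ˢ (univ : Set Y)) = P A)
    (hRQ : ∀ B, MeasurableSet B → R ((univ : Set X) ×ˢ B) = Q B)
    (𝔄y : Y → MeasurableSpace X) (hsub : ∀ y, 𝔄y y ≤ mX)
    (S : ∀ y, @Measure X (𝔄y y)) (hS : ∀ y, @IsProbabilityMeasure X (𝔄y y) (S y))
    (hDis1 : ∀ A : Set X, MeasurableSet A → ∃ N, MeasurableSet N ∧ Q N = 0 ∧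
      (∀ y ∉ N, MeasurableSet[𝔄y y] A) ∧
      ∃ g : Y → ENNReal, Measurable g ∧ ∀ y ∉ N, S y A = g y)
    (hDis2 : ∀ (A : Set X) (B : Set Y), MeasurableSet A → MeasurableSet B →
      ∫⁻ y in B, S y A ∂Q = R (A ×ˢ B))
    (memM : Set (X × Y) → Prop)
    (hmemM : ∀ E, memM E ↔
      ∃ N, MeasurableSet N ∧ Q N = 0 ∧ ∀ y ∉ N, S y {x | (x, y) ∈ E} = 0)
    (Rd : Set (X × Y) → ENNReal)
    (hRd : ∀ W N, MeasurableSet W → memM N → Rd (symmDiff W N) = R W) :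
    -- every set measurable for the R-completion of 𝔄 ⊗ 𝔅 belongs to 𝔄⊙𝔅,
    -- and R̂_⊙ agrees there with the completion R̂ of R
    ∀ E : Set (X × Y), NullMeasurableSet E R →
      (∃ W N, MeasurableSet W ∧ memM N ∧ E = symmDiff W N) ∧ Rd E = R E :=
  stmt12_general (mX := mX) (mY := mY) Q R 𝔄y S hS hDis1 hDis2 memM hmemM Rd hRd
end
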